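/- arXiv:math/0702352 — 2 statements merged into one kernel-verified Lean document; each statement's English description precedes it below -/
import Mathlib

section
/- Let G be an ordered graph and let k, ℓ ∈ ℕ. If the irreducible block decomposition of G contains at least k blocks of order at least ℓ, then S_n(G) ≥ F_{n,ℓ} for each n ≤ k. -/
open Finset

/-- `IndSub G H` : `G` is an induced ordered subgraph of `H`, i.e. there is an
order-preserving injection of the vertices preserving adjacency and non-adjacency. -/
def IndSub {m n : ℕ} (G : SimpleGraph (Fin m)) (H : SimpleGraph (Fin n)) : Prop :=
  ∃ φ : Fin m ↪o Fin n, ∀ i j : Fin m, G.Adj i j ↔ H.Adj (φ i) (φ j)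

/-- A hereditary property of ordered graphs: a family of ordered graphs (one set of
graphs on `[n]` for each `n`), closed under taking induced ordered subgraphs.  (Closure
under order-preserving isomorphisms is automatic in this encoding, since the only
order-preserving bijection of `Fin n` is the identity.) -/
structure HerProp where
  mem : ∀ n : ℕ, Set (SimpleGraph (Fin n))
  hered : ∀ {m n : ℕ} (G : SimpleGraph (Fin m)) (H : SimpleGraph (Fin n)),
    IndSub G H → H ∈ mem n → G ∈ mem m

/-- The speed of a property: `n ↦ |P_n|`. -/
noncomputable def speed (P : HerProp) (n : ℕ) : ℕ := (P.mem n).ncard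

/-- Generalized Fibonacci numbers `F_{n,k}` of order `k`:
`F_{0,k} = 1`, `F_{n,k} = F_{n-1,k} + ⋯ + F_{n-k,k}` (terms with negative index are 0). -/
def genFib (k : ℕ) : ℕ → ℕ
  | 0 => 1
  | n + 1 => ∑ i ∈ Finset.range k, if i ≤ n then genFib k (n - i) else 0
decreasing_by omega

/-- `lHom G ℓ x y` : vertices `x` and `y` are `ℓ`-homogeneous in `G`
(`x ∼_ℓ y`), i.e. they have the same neighbourhoods outside `N_ℓ(x) ∪ N_ℓ(y)`. -/
def lHom {N : ℕ} (G : SimpleGraph (Fin N)) (ℓ : ℕ) (x y : Fin N) : Prop :=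
  ∀ v : Fin N, ℓ ≤ ((v : ℤ) - (x : ℤ)).natAbs → ℓ ≤ ((v : ℤ) - (y : ℤ)).natAbs →
    (G.Adj x v ↔ G.Adj y v)

/-- `G` contains a `k`-structure of Type 1. -/
def HasType1 {N : ℕ} (G : SimpleGraph (Fin N)) (k : ℕ) : Prop :=
  ∃ (y : Fin N) (x : Fin (2 * k) → Fin N), StrictMono x ∧
    ((∀ i, y < x i) ∨ (∀ i, x i < y)) ∧
    ∀ i j : Fin (2 * k), (j : ℕ) = (i : ℕ) + 1 → (G.Adj y (x i) ↔ ¬ G.Adj y (x j))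

/-- `G` contains a `k`-structure of Type 2 (2(a) or 2(b)). -/
def HasType2 {N : ℕ} (G : SimpleGraph (Fin N)) (k : ℕ) : Prop :=
  ∃ x y : Fin (2 * k) → Fin N, StrictMono x ∧ (StrictMono y ∨ StrictAnti y) ∧
    (∀ i j, x i < y j) ∧
    ∀ i j : Fin (2 * k), (j : ℕ) = (i : ℕ) + 1 → (G.Adj (x i) (y i) ↔ ¬ G.Adj (x j) (y j))

/-- `G` contains a `(k,ℓ)`-structure of Type 3. -/
def HasType3 {N : ℕ} (G : SimpleGraph (Fin N)) (k ℓ : ℕ) : Prop :=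
  ∃ (x y : Fin (2 * k) → Fin N) (z : Fin (2 * k) → Fin (ℓ - 1) → Fin N),
    (∀ i t, x i < z i t) ∧ (∀ i, StrictMono (z i)) ∧ (∀ i t, z i t < y i) ∧
    (∀ i, x i < y i) ∧
    (∀ i j : Fin (2 * k), (j : ℕ) = (i : ℕ) + 1 → y i < x j) ∧
    ∀ i j : Fin (2 * k), (j : ℕ) = (i : ℕ) + 1 → (G.Adj (x i) (y i) ↔ ¬ G.Adj (x j) (y j))

/-- `S_n(G)` : the number of pairwise non-isomorphic (as ordered graphs) induced ordered
subgraphs of `G` of order `n`. -/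
noncomputable def numSub {N : ℕ} (G : SimpleGraph (Fin N)) (n : ℕ) : ℕ :=
  {H : SimpleGraph (Fin n) | IndSub H G}.ncard
/-- The ordered graph `M^<_I(X,Y)` with `|X| = |Y| = m` (vertices `0,…,m-1` playing the
role of `x_1 < … < x_m` and vertices `m,…,2m-1` the role of `y_1 < … < y_m`). -/
def Mlt (m : ℕ) (I1 I2 I3 I4 : Bool) : SimpleGraph (Fin (2 * m)) :=
  SimpleGraph.fromRel (fun u v =>
    ((u : ℕ) < m ∧ (v : ℕ) < m ∧ I1 = true) ∨
    (m ≤ (u : ℕ) ∧ m ≤ (v : ℕ) ∧ I4 = true) ∨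
    ((u : ℕ) < m ∧ m ≤ (v : ℕ) ∧
      (((u : ℕ) < (v : ℕ) - m ∧ I2 = true) ∨
       ((v : ℕ) - m < (u : ℕ) ∧ I3 = true) ∨
       ((u : ℕ) = (v : ℕ) - m ∧ Even (u : ℕ)))))

/-- The ordered graph `M^>_I(X,Y)`: as `M^<_I(X,Y)` but with the `y`-indices reversed,
i.e. vertex `m + p` plays the role of `y_{m-p}` (so that `y_1 > y_2 > … > y_m`). -/
def Mgt (m : ℕ) (I1 I2 I3 I4 : Bool) : SimpleGraph (Fin (2 * m)) :=
  SimpleGraph.fromRel (fun u v =>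
    ((u : ℕ) < m ∧ (v : ℕ) < m ∧ I1 = true) ∨
    (m ≤ (u : ℕ) ∧ m ≤ (v : ℕ) ∧ I4 = true) ∨
    ((u : ℕ) < m ∧ m ≤ (v : ℕ) ∧
      (((u : ℕ) < 2 * m - 1 - (v : ℕ) ∧ I2 = true) ∨
       (2 * m - 1 - (v : ℕ) < (u : ℕ) ∧ I3 = true) ∨
       ((u : ℕ) = 2 * m - 1 - (v : ℕ) ∧ Even (u : ℕ)))))

/-- `B` is a set of consecutive vertices which is pairwise 1-homogeneous. -/
def IsHomInterval {N : ℕ} (G : SimpleGraph (Fin N)) (B : Set (Fin N)) : Prop :=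
  (∀ x y z : Fin N, x ∈ B → z ∈ B → x ≤ y → y ≤ z → y ∈ B) ∧
  (∀ x ∈ B, ∀ y ∈ B, lHom G 1 x y)

/-- A homogeneous block of `G`: a maximal 1-homogeneous set of consecutive vertices. -/
def IsHomBlock {N : ℕ} (G : SimpleGraph (Fin N)) (B : Set (Fin N)) : Prop :=
  B.Nonempty ∧ IsHomInterval G B ∧ ∀ B' : Set (Fin N), B ⊆ B' → IsHomInterval G B' → B = B'

/-- `G` has at most `k` homogeneous blocks. -/
def HomBlocksLE {N : ℕ} (G : SimpleGraph (Fin N)) (k : ℕ) : Prop :=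
  {B : Set (Fin N) | IsHomBlock G B}.ncard ≤ k

/-- `TailBound G k M` : the homogeneous block sequence `t_1 ≥ t_2 ≥ …` of `G` satisfies
`Σ_{i=k+2}^∞ t_i ≤ M`, i.e. some (equivalently, the largest) `k+1` homogeneous blocks
cover all but at most `M` vertices. -/
def TailBound {N : ℕ} (G : SimpleGraph (Fin N)) (k M : ℕ) : Prop :=
  ∃ S : Finset (Set (Fin N)), S.card ≤ k + 1 ∧ (∀ B ∈ S, IsHomBlock G B) ∧
    {v : Fin N | ∀ B ∈ S, v ∉ B}.ncard ≤ M

/-- An ordered graph is irreducible if no pair of vertices `u < v` separates its edges. -/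
def IrredGraph {N : ℕ} (G : SimpleGraph (Fin N)) : Prop :=
  ¬ ∃ u v : Fin N, u < v ∧
      ∀ i j : Fin N, i < j → G.Adj i j → ((j : ℕ) ≤ (u : ℕ) ∨ (v : ℕ) ≤ (i : ℕ))

/-- `G` is `ℓ`-empty: it has no edges of length at least `ℓ`. -/
def lEmpty {N : ℕ} (G : SimpleGraph (Fin N)) (ℓ : ℕ) : Prop :=
  ∀ u v : Fin N, G.Adj u v → ((u : ℤ) - (v : ℤ)).natAbs < ℓ

/-- `IsFamSum G sz Gs` : `G = G_1 + … + G_s`, the consecutive sum of the ordered graphs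
`Gs 0, …, Gs (s-1)` (of orders `sz 0, …, sz (s-1)`), with no edges between summands. -/
def IsFamSum {N s : ℕ} (G : SimpleGraph (Fin N)) (sz : Fin s → ℕ)
    (Gs : ∀ i, SimpleGraph (Fin (sz i))) : Prop :=
  N = ∑ i, sz i ∧
  ∀ u v : Fin N, G.Adj u v ↔ ∃ (i : Fin s) (x y : Fin (sz i)),
    (Gs i).Adj x y ∧
    (u : ℕ) = (∑ j ∈ Finset.univ.filter (fun j => j < i), sz j) + (x : ℕ) ∧
    (v : ℕ) = (∑ j ∈ Finset.univ.filter (fun j => j < i), sz j) + (y : ℕ)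

/-- `(Gs 0, …, Gs (s-1))` is the irreducible block decomposition of `G`:
`G = G_1 + ⋯ + G_s` with every block nonempty and irreducible.  (Such a
decomposition is unique.) -/
def IsIrredDecomp {N s : ℕ} (G : SimpleGraph (Fin N)) (sz : Fin s → ℕ)
    (Gs : ∀ i, SimpleGraph (Fin (sz i))) : Prop :=
  IsFamSum G sz Gs ∧ (∀ i, 1 ≤ sz i) ∧ ∀ i, IrredGraph (Gs i)

/-- `J_1^{(n)} = K_n`. -/
def Jgraph1 (n : ℕ) : SimpleGraph (Fin n) := ⊤

/-- `J_2^{(n)}` : single edge `{1,n}`. -/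
def Jgraph2 (n : ℕ) : SimpleGraph (Fin n) :=
  SimpleGraph.fromRel (fun u v => (u : ℕ) = 0 ∧ (v : ℕ) = n - 1)

/-- `J_3^{(n)}` : star at the first vertex. -/
def Jgraph3 (n : ℕ) : SimpleGraph (Fin n) :=
  SimpleGraph.fromRel (fun u _ => (u : ℕ) = 0)

/-- `J_4^{(n)}` : star at the last vertex. -/
def Jgraph4 (n : ℕ) : SimpleGraph (Fin n) :=
  SimpleGraph.fromRel (fun _ v => (v : ℕ) = n - 1)

/-- `L^{(n)}` : the monotone path. -/
def Lgraph (n : ℕ) : SimpleGraph (Fin n) :=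
  SimpleGraph.fromRel (fun u v => (v : ℕ) = (u : ℕ) + 1)

/-- `Q_1` : edge set `{13, 24}` on `[4]`. -/
def Qgraph1 : SimpleGraph (Fin 4) :=
  SimpleGraph.fromRel (fun u v => ((u : ℕ) = 0 ∧ (v : ℕ) = 2) ∨ ((u : ℕ) = 1 ∧ (v : ℕ) = 3))

/-- `Q_2` : edge set `{14, 23}` on `[4]`. -/
def Qgraph2 : SimpleGraph (Fin 4) :=
  SimpleGraph.fromRel (fun u v => ((u : ℕ) = 0 ∧ (v : ℕ) = 3) ∨ ((u : ℕ) = 1 ∧ (v : ℕ) = 2))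

/-- `G` is order-isomorphic to a member of the family `𝒥`. -/
def InJ {n : ℕ} (G : SimpleGraph (Fin n)) : Prop :=
  G = Jgraph1 n ∨ G = Jgraph2 n ∨ G = Jgraph3 n ∨ G = Jgraph4 n ∨ G = Lgraph n ∨
  (n = 4 ∧ IndSub G Qgraph1) ∨ (n = 4 ∧ IndSub G Qgraph2)

/-- `G` is order-isomorphic to a member of `𝒥_ℓ`. -/
def InJle (ℓ : ℕ) {n : ℕ} (G : SimpleGraph (Fin n)) : Prop :=
  (n ≤ ℓ ∧ (G = Jgraph1 n ∨ G = Jgraph2 n ∨ G = Jgraph3 n ∨ G = Jgraph4 n ∨ G = Lgraph n)) ∨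
  (4 ≤ ℓ ∧ n = 4 ∧ (IndSub G Qgraph1 ∨ IndSub G Qgraph2))

/-- `A` is a sum `B_1 + ⋯ + B_t` of members of `𝒥_ℓ` which are pairwise comparable in
the induced ordered subgraph order. -/
def InJA (ℓ : ℕ) {n : ℕ} (A : SimpleGraph (Fin n)) : Prop :=
  ∃ (t : ℕ) (sz : Fin t → ℕ) (Bs : ∀ j, SimpleGraph (Fin (sz j))),
    IsFamSum A sz Bs ∧ (∀ j, InJle ℓ (Bs j)) ∧
    ∀ j j', IndSub (Bs j) (Bs j') ∨ IndSub (Bs j') (Bs j)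

/-- `G ∈ 𝒥(k,ℓ)`. -/
def InJkl (k ℓ : ℕ) {n : ℕ} (G : SimpleGraph (Fin n)) : Prop :=
  ∃ (s : ℕ) (sz : Fin s → ℕ) (As : ∀ i, SimpleGraph (Fin (sz i))),
    s ≤ k ∧ IsFamSum G sz As ∧ ∀ i, InJA ℓ (As i)


def pieceOf (A : ℕ → ℕ) (m x : ℕ) : ℕ := ((Finset.range m).filter (fun j => A (j+1) ≤ x)).card

lemma filter_range_downclosed (P : ℕ → Prop) [DecidablePred P] :
    ∀ m : ℕ, (∀ i j, i ≤ j → j < m → P j → P i) →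
    (Finset.range m).filter P = Finset.range (((Finset.range m).filter P).card) := by
  intro m
  induction m with
  | zero => simp
  | succ m ih =>
    intro hdc
    by_cases hPm : P m
    · have hall : (Finset.range (m+1)).filter P = Finset.range (m+1) := by
        rw [Finset.filter_true_of_mem]
        intro i hi
        exact hdc i m (by simp at hi; omega) (by omega) hPm
      rw [hall, Finset.card_range]
    · have heq : (Finset.range (m+1)).filter P = (Finset.range m).filter P := by
        rw [Finset.range_add_one, Finset.filter_insert, if_neg hPm]
      rw [heq]
      exact ih (fun i j hj hjm => hdc i j hj (by omega))

lemma pieceOf_bounds {A : ℕ → ℕ} {m x : ℕ} (hA0 : A 0 = 0)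
    (hmono : ∀ i j, i ≤ j → A i ≤ A j) (hx : x < A m) :
    pieceOf A m x < m ∧ A (pieceOf A m x) ≤ x ∧ x < A (pieceOf A m x + 1) := by
  classical
  have hm1 : 1 ≤ m := by
    by_contra h
    push_neg at h
    interval_cases m
    omega
  have hdc : ∀ i j, i ≤ j → j < m → (fun j => A (j+1) ≤ x) j → (fun j => A (j+1) ≤ x) i :=
    fun i j hij _ hj => le_trans (hmono (i+1) (j+1) (by omega)) hj
  have hfilt := filter_range_downclosed (fun j => A (j+1) ≤ x) m hdc
  set c := pieceOf A m x with hc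
  have hcdef : c = ((Finset.range m).filter (fun j => A (j+1) ≤ x)).card := rfl
  have hclt : c < m := by
    have hnot : (m - 1) ∉ (Finset.range m).filter (fun j => A (j+1) ≤ x) := by
      simp only [Finset.mem_filter, Finset.mem_range]
      rintro ⟨-, h⟩
      have : m - 1 + 1 = m := by omega
      rw [this] at h
      omega
    have hsub : (Finset.range m).filter (fun j => A (j+1) ≤ x) ⊆ (Finset.range m).erase (m-1) := by
      intro y hy
      refine Finset.mem_erase.2 ⟨?_, (Finset.mem_filter.1 hy).1⟩
      intro h; exact hnot (h ▸ hy)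
    have := Finset.card_le_card hsub
    rw [Finset.card_erase_of_mem (by simp; omega), Finset.card_range] at this
    omega
  refine ⟨hclt, ?_, ?_⟩
  · rcases Nat.eq_zero_or_pos c with h0 | hpos
    · rw [h0, hA0]; omega
    · have : c - 1 ∈ (Finset.range m).filter (fun j => A (j+1) ≤ x) := by
        rw [hfilt, ← hcdef]
        simp
        omega
      have h := (Finset.mem_filter.1 this).2
      have : c - 1 + 1 = c := by omega
      rwa [this] at h
  · have : c ∉ (Finset.range m).filter (fun j => A (j+1) ≤ x) := by
      rw [hfilt, ← hcdef]
      simp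
    simp only [Finset.mem_filter, Finset.mem_range, not_and] at this
    have := this hclt
    omega

lemma pieceOf_eq {A : ℕ → ℕ} {m x j : ℕ} (hA0 : A 0 = 0)
    (hmono : ∀ i j, i ≤ j → A i ≤ A j) (hx : x < A m)
    (hj : j < m) (h1 : A j ≤ x) (h2 : x < A (j+1)) : pieceOf A m x = j := by
  obtain ⟨hclt, hc1, hc2⟩ := pieceOf_bounds hA0 hmono hx
  set c := pieceOf A m x
  rcases lt_trichotomy c j with h | h | h
  · have := hmono (c+1) j (by omega)
    omega
  · exact h
  · have := hmono (j+1) c (by omega)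
    omega

def Asum (L : List ℕ) (j : ℕ) : ℕ := (L.take j).sum

lemma Asum_zero (L : List ℕ) : Asum L 0 = 0 := rfl

lemma Asum_length (L : List ℕ) : Asum L L.length = L.sum := by
  rw [Asum, List.take_length]

lemma Asum_succ (L : List ℕ) {j : ℕ} (h : j < L.length) :
    Asum L (j+1) = Asum L j + L.getD j 0 := by
  rw [Asum, Asum, List.sum_take_succ L j h, List.getD_eq_getElem L 0 h]

lemma Asum_mono (L : List ℕ) : ∀ i j, i ≤ j → Asum L i ≤ Asum L j := by
  intro i j hij
  induction j, hij using Nat.le_induction with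
  | base => exact le_refl _
  | succ j hj ih =>
    rcases Nat.lt_or_ge j L.length with h | h
    · rw [Asum_succ L h]; omega
    · have : L.take (j+1) = L.take j := by
        rw [List.take_of_length_le h, List.take_of_length_le (by omega)]
      calc Asum L i ≤ Asum L j := ih
        _ = Asum L (j+1) := by rw [Asum, Asum, this]

lemma Asum_getD_mem (L : List ℕ) {j : ℕ} (h : j < L.length) : L.getD j 0 ∈ L := by
  rw [List.getD_eq_getElem L 0 h]
  exact List.getElem_mem _

def comps (ℓ : ℕ) : ℕ → Finset (List ℕ)
  | 0 => {[]}
  | n + 1 => (Finset.range ℓ).biUnion fun i =>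
      if i ≤ n then (comps ℓ (n - i)).image (fun L => (i + 1) :: L) else ∅
decreasing_by omega

lemma comps_head {ℓ n : ℕ} {i : ℕ} (hi : i ∈ Finset.range ℓ) {L : List ℕ}
    (hL : L ∈ if i ≤ n then (comps ℓ (n - i)).image (fun L => (i + 1) :: L) else (∅ : Finset (List ℕ))) :
    ∃ T, L = (i+1) :: T ∧ i ≤ n ∧ T ∈ comps ℓ (n - i) := by
  split at hL
  · obtain ⟨T, hT, rfl⟩ := Finset.mem_image.1 hL
    exact ⟨T, rfl, by assumption, hT⟩
  · simp at hL

lemma comps_card (ℓ : ℕ) : ∀ n, (comps ℓ n).card = genFib ℓ n := by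
  intro n
  induction n using Nat.strong_induction_on with
  | _ n ih =>
    match n with
    | 0 => simp [comps, genFib]
    | n + 1 =>
      rw [comps, genFib, Finset.card_biUnion]
      · refine Finset.sum_congr rfl fun i hi => ?_
        split
        · rw [Finset.card_image_of_injective _ (fun a b h => by simpa using h)]
          exact ih (n - i) (by omega)
        · simp
      · intro i hi j hj hij
        intro X hX1 hX2 L hL
        obtain ⟨T, rfl, _, _⟩ := comps_head hi (hX1 hL)
        obtain ⟨T', hT', _, _⟩ := comps_head hj (hX2 hL)
        simp at hT'
        omega

lemma comps_mem {ℓ : ℕ} : ∀ n, ∀ L ∈ comps ℓ n, L.sum = n ∧ ∀ a ∈ L, 1 ≤ a ∧ a ≤ ℓ := by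
  intro n
  induction n using Nat.strong_induction_on with
  | _ n ih =>
    match n with
    | 0 => intro L hL; simp [comps] at hL; simp [hL]
    | n + 1 =>
      intro L hL
      rw [comps, Finset.mem_biUnion] at hL
      obtain ⟨i, hi, hL⟩ := hL
      obtain ⟨T, rfl, hin, hT⟩ := comps_head hi hL
      obtain ⟨hsum, hparts⟩ := ih (n - i) (by omega) T hT
      simp only [Finset.mem_range] at hi
      constructor
      · simp [hsum]; omega
      · intro a ha
        rcases List.mem_cons.1 ha with rfl | ha
        · omega
        · exact hparts a ha

lemma sum_ge_length {L : List ℕ} (h : ∀ a ∈ L, 1 ≤ a) : L.length ≤ L.sum := by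
  induction L with
  | nil => simp
  | cons a t ihh =>
    simp only [List.length_cons, List.sum_cons]
    have := h a (by simp)
    have := ihh (fun b hb => h b (by simp [hb]))
    omega

/-- helper: if `a < b` then `a` is a proper partial sum of `a::t1` w.r.t. its conditions,
but not of `b::t2`. -/
lemma partial_sum_recover : ∀ (L1 : List ℕ) (L2 : List ℕ), (∀ a ∈ L1, 1 ≤ a) → (∀ a ∈ L2, 1 ≤ a) →
    L1.sum = L2.sum →
    (∀ c, 0 < c → c < L1.sum →
      ((∃ j, 0 < j ∧ j < L1.length ∧ (L1.take j).sum = c) ↔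
       (∃ j, 0 < j ∧ j < L2.length ∧ (L2.take j).sum = c))) →
    L1 = L2 := by
  intro L1
  induction L1 with
  | nil =>
    intro L2 _ h2 hsum _
    cases L2 with
    | nil => rfl
    | cons b t2 =>
      exfalso
      have := h2 b (by simp)
      simp at hsum
      omega
  | cons a t1 ih =>
    intro L2 h1 h2 hsum hps
    cases L2 with
    | nil =>
      exfalso
      have := h1 a (by simp)
      simp at hsum
      omega
    | cons b t2 =>
      -- first, a = b
      have key : ∀ (x : ℕ) (s1 s2 : List ℕ), (∀ a ∈ s2, 1 ≤ a) →
          (x :: s1).sum = (x :: s2).sum →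
          (∀ c, 0 < c → c < (x::s1).sum →
            ((∃ j, 0 < j ∧ j < (x::s1).length ∧ ((x::s1).take j).sum = c) →
             (∃ j, 0 < j ∧ j < (x::s2).length ∧ ((x::s2).take j).sum = c))) →
          s1.sum ≤ s2.sum := by
        intro x s1 s2 hs2 hseq hdir
        by_contra hlt
        push_neg at hlt
        -- s2.sum < s1.sum, but sums of x::s1 = x::s2: contradiction
        simp at hseq; omega
      have hab : a = b := by
        by_contra hne
        -- wlog via cases
        rcases Nat.lt_or_ge a b with hlt | hge
        · -- a < b : a is partial sum of L1 not of L2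
          have hs1 : (0:ℕ) < t1.sum := by
            simp at hsum
            omega
          have hL1len : 1 < (a :: t1).length := by
            cases t1 with
            | nil => simp at hs1
            | cons _ _ => simp
          have h := (hps a (h1 a (by simp)) (by simp; omega)).1 ⟨1, by omega, hL1len, by simp⟩
          obtain ⟨j, hj0, hjlen, hjsum⟩ := h
          have : ((b :: t2).take j).sum ≥ b := by
            cases j with
            | zero => omega
            | succ j' => simp [List.take_succ_cons]
          omega
        · have hlt : b < a := by omega
          have hs2 : (0:ℕ) < t2.sum := by
            simp at hsum
            omega
          have hL2len : 1 < (b :: t2).length := by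
            cases t2 with
            | nil => simp at hs2
            | cons _ _ => simp
          have h := (hps b (h2 b (by simp)) (by simp at hsum ⊢; omega)).2 ⟨1, by omega, hL2len, by simp⟩
          obtain ⟨j, hj0, hjlen, hjsum⟩ := h
          have : ((a :: t1).take j).sum ≥ a := by
            cases j with
            | zero => omega
            | succ j' => simp [List.take_succ_cons]
          omega
      subst hab
      have hts : t1.sum = t2.sum := by simp at hsum; omega
      congr 1
      refine ih t2 (fun x hx => h1 x (by simp [hx])) (fun x hx => h2 x (by simp [hx])) hts ?_
      intro c hc0 hcs
      have hps' := hps (c + a) (by omega) (by simp; omega)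
      constructor
      · intro ⟨j, hj0, hjl, hjs⟩
        have h := hps'.1 ⟨j + 1, by omega, by simpa using (by omega : j < t1.length),
          by simp [List.take_succ_cons, hjs]; omega⟩
        obtain ⟨j', hj'0, hj'l, hj's⟩ := h
        cases j' with
        | zero => omega
        | succ j'' =>
          refine ⟨j'', ?_, by simpa using hj'l, ?_⟩
          · rcases Nat.eq_zero_or_pos j'' with rfl | h'' 
            · simp at hj's; omega
            · exact h''
          · simp [List.take_succ_cons] at hj's; omega
      · intro ⟨j, hj0, hjl, hjs⟩
        have h := hps'.2 ⟨j + 1, by omega, by simpa using (by omega : j < t2.length),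
          by simp [List.take_succ_cons, hjs]; omega⟩
        obtain ⟨j', hj'0, hj'l, hj's⟩ := h
        cases j' with
        | zero => omega
        | succ j'' =>
          refine ⟨j'', ?_, by simpa using hj'l, ?_⟩
          · rcases Nat.eq_zero_or_pos j'' with rfl | h''
            · simp at hj's; omega
            · exact h''
          · simp [List.take_succ_cons] at hj's; omega

variable {N : ℕ}

def CrossedIn (G : SimpleGraph (Fin N)) (S : Finset (Fin N)) : Prop :=
  ∀ u ∈ S, ∀ v ∈ S, u < v → (∀ w ∈ S, w ≤ u ∨ v ≤ w) →
    ∃ p ∈ S, ∃ q ∈ S, G.Adj p q ∧ p ≤ u ∧ v ≤ q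

lemma crossedIn_of_span {G : SimpleGraph (Fin N)} {S : Finset (Fin N)} {p q : Fin N}
    (hp : p ∈ S) (hq : q ∈ S) (hadj : G.Adj p q)
    (hmin : ∀ x ∈ S, p ≤ x) (hmax : ∀ x ∈ S, x ≤ q) : CrossedIn G S := by
  intro u hu v hv _ _
  exact ⟨p, hp, q, hq, hadj, hmin u hu, hmax v hv⟩

/-- inserting a vertex strictly between min and max preserves CrossedIn -/
lemma crossedIn_insert_mid {G : SimpleGraph (Fin N)} {S : Finset (Fin N)} {w : Fin N}
    (hS : CrossedIn G S) (hlb : ∃ x ∈ S, x < w) (hub : ∃ x ∈ S, w < x) :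
    CrossedIn G (insert w S) := by
  by_cases hwS : w ∈ S
  · rwa [Finset.insert_eq_self.2 hwS]
  intro u hu v hv huv hcons
  rcases Finset.mem_insert.1 hu with hue | huS
  · -- u = w; let u' = max elem of S below u
    obtain ⟨x0, hx0, hx0w⟩ := hlb
    rw [← hue] at hx0w hwS hub
    have hvS : v ∈ S := by
      rcases Finset.mem_insert.1 hv with hve | h
      · rw [hve, hue] at huv; exact absurd huv (lt_irrefl _)
      · exact h
    have hne : (S.filter (· < u)).Nonempty := ⟨x0, Finset.mem_filter.2 ⟨hx0, hx0w⟩⟩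
    have hu'mem : (S.filter (· < u)).max' hne ∈ S.filter (· < u) := Finset.max'_mem _ hne
    set u' := (S.filter (· < u)).max' hne with hu'def
    have hu'S : u' ∈ S := (Finset.mem_filter.1 hu'mem).1
    have hu'w : u' < u := (Finset.mem_filter.1 hu'mem).2
    have hcons' : ∀ x ∈ S, x ≤ u' ∨ v ≤ x := by
      intro x hx
      by_cases hxw : x < u
      · exact Or.inl (Finset.le_max' (S.filter (· < u)) x (Finset.mem_filter.2 ⟨hx, hxw⟩))
      · push_neg at hxw
        have hxw' : u < x := lt_of_le_of_ne hxw (fun h => hwS (h ▸ hx))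
        rcases hcons x (Finset.mem_insert_of_mem hx) with h | h
        · exact absurd (lt_of_lt_of_le hxw' h) (lt_irrefl _)
        · exact Or.inr h
    have hu'v : u' < v := lt_trans hu'w huv
    obtain ⟨p, hp, q, hq, hadj, hpu, hvq⟩ := hS u' hu'S v hvS hu'v hcons'
    exact ⟨p, Finset.mem_insert_of_mem hp, q, Finset.mem_insert_of_mem hq, hadj,
      le_of_lt (lt_of_le_of_lt hpu hu'w), hvq⟩
  · rcases Finset.mem_insert.1 hv with hve | hvS
    · -- v = w; let v' = min elem of S above v
      obtain ⟨x1, hx1, hx1w⟩ := hub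
      rw [← hve] at hx1w hwS
      have hne : (S.filter (v < ·)).Nonempty := ⟨x1, Finset.mem_filter.2 ⟨hx1, hx1w⟩⟩
      have hv'mem : (S.filter (v < ·)).min' hne ∈ S.filter (v < ·) := Finset.min'_mem _ hne
      set v' := (S.filter (v < ·)).min' hne with hv'def
      have hv'S : v' ∈ S := (Finset.mem_filter.1 hv'mem).1
      have hv'w : v < v' := (Finset.mem_filter.1 hv'mem).2
      have hcons' : ∀ x ∈ S, x ≤ u ∨ v' ≤ x := by
        intro x hx
        by_cases hxw : v < x
        · exact Or.inr (Finset.min'_le (S.filter (v < ·)) x (Finset.mem_filter.2 ⟨hx, hxw⟩))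
        · push_neg at hxw
          have hxw' : x < v := lt_of_le_of_ne hxw (fun h => hwS (h ▸ hx))
          rcases hcons x (Finset.mem_insert_of_mem hx) with h | h
          · exact Or.inl h
          · exact absurd (lt_of_le_of_lt h hxw') (lt_irrefl _)
      obtain ⟨p, hp, q, hq, hadj, hpu, hvq⟩ := hS u huS v' hv'S (lt_trans huv hv'w) hcons'
      exact ⟨p, Finset.mem_insert_of_mem hp, q, Finset.mem_insert_of_mem hq, hadj,
        hpu, le_of_lt (lt_of_lt_of_le hv'w hvq)⟩
    · have hcons' : ∀ x ∈ S, x ≤ u ∨ v ≤ x := fun x hx => hcons x (Finset.mem_insert_of_mem hx)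
      obtain ⟨p, hp, q, hq, hadj, hpu, hvq⟩ := hS u huS v hvS huv hcons'
      exact ⟨p, Finset.mem_insert_of_mem hp, q, Finset.mem_insert_of_mem hq, hadj, hpu, hvq⟩

lemma exists_crossed (G : SimpleGraph (Fin N)) (lo hi : ℕ) (hhi : hi ≤ N)
    (hcross : ∀ t, lo ≤ t → t + 1 < hi →
      ∃ p q : Fin N, G.Adj p q ∧ lo ≤ (p:ℕ) ∧ (p:ℕ) ≤ t ∧ t < (q:ℕ) ∧ (q:ℕ) < hi) :
    ∀ a, 1 ≤ a → a ≤ hi - lo →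
      ∃ S : Finset (Fin N), S.card = a ∧ (∀ x ∈ S, lo ≤ (x:ℕ) ∧ (x:ℕ) < hi) ∧ CrossedIn G S := by
  intro a
  induction a with
  | zero => omega
  | succ a iha =>
    intro _ hale
    rcases Nat.eq_zero_or_pos a with rfl | ha1
    · -- base case a+1 = 1
      have hlohi : lo < hi := by omega
      refine ⟨{⟨lo, by omega⟩}, by simp, ?_, ?_⟩
      · intro x hx; simp at hx; subst hx; simp [hlohi]
      · intro u hu v hv huv _
        simp at hu hv
        subst hu; subst hv
        exact absurd huv (lt_irrefl _)
    obtain ⟨S, hcard, hbound, hcrossed⟩ := iha ha1 (by omega)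
    have hSne : S.Nonempty := Finset.card_pos.1 (by omega)
    set u0 := S.min' hSne with hu0def
    set v0 := S.max' hSne with hv0def
    have hu0S : u0 ∈ S := Finset.min'_mem _ _
    have hv0S : v0 ∈ S := Finset.max'_mem _ _
    have hu0b := hbound u0 hu0S
    have hv0b := hbound v0 hv0S
    by_cases hfull : ∀ w : Fin N, u0 < w → w < v0 → w ∈ S
    · -- S = Icc u0 v0
      have hSIcc : S = Finset.Icc u0 v0 := by
        ext x
        simp only [Finset.mem_Icc]
        constructor
        · intro hx; exact ⟨Finset.min'_le _ _ hx, Finset.le_max' _ _ hx⟩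
        · rintro ⟨h1, h2⟩
          rcases eq_or_lt_of_le h1 with rfl | h1'
          · exact hu0S
          rcases eq_or_lt_of_le h2 with rfl | h2'
          · exact hv0S
          exact hfull x h1' h2'
      have hcardIcc : a = (v0:ℕ) + 1 - (u0:ℕ) := by
        rw [hSIcc] at hcard
        rw [Fin.card_Icc] at hcard
        omega
      have hu0v0 : (u0:ℕ) ≤ (v0:ℕ) := by
        have := Finset.min'_le _ _ hv0S
        exact this
      by_cases hv0hi : (v0:ℕ) + 1 < hi
      · -- extend to the right
        obtain ⟨p, q, hadj, hlop, hpv0, hv0q, hqhi⟩ := hcross (v0:ℕ) hv0b.1 hv0hi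
        have hqS : q ∉ S := by
          intro h
          have := Finset.le_max' _ _ h
          rw [Fin.le_def] at this; omega
        have hv0q' : v0 < q := by rw [Fin.lt_def]; omega
        by_cases hpu : (u0:ℕ) ≤ (p:ℕ)
        · -- p inside S
          have hpS : p ∈ S := by
            rw [hSIcc, Finset.mem_Icc, Fin.le_def, Fin.le_def]
            omega
          refine ⟨insert q S, ?_, ?_, ?_⟩
          · rw [Finset.card_insert_of_notMem hqS, hcard]
          · intro x hx
            rcases Finset.mem_insert.1 hx with rfl | hx
            · exact ⟨by omega, hqhi⟩
            · exact hbound x hx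
          · intro u hu v hv huv hcons
            by_cases hvq : v = q
            · subst hvq
              have huS : u ∈ S := by
                rcases Finset.mem_insert.1 hu with rfl | h
                · exact absurd huv (lt_irrefl _)
                · exact h
              have huv0 : u = v0 := by
                rcases hcons v0 (Finset.mem_insert_of_mem hv0S) with h | h
                · exact le_antisymm (Finset.le_max' _ _ huS) h
                · exact absurd (lt_of_lt_of_le hv0q' h) (lt_irrefl _)
              exact ⟨p, Finset.mem_insert_of_mem hpS, v, Finset.mem_insert.2 (Or.inl rfl), hadj,
                by rw [huv0, Fin.le_def]; omega, le_refl _⟩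
            · have hvS : v ∈ S := by
                rcases Finset.mem_insert.1 hv with h | h
                · exact absurd h hvq
                · exact h
              have huS : u ∈ S := by
                rcases Finset.mem_insert.1 hu with rfl | h
                · exfalso
                  have := Finset.le_max' _ _ hvS
                  have : v < u := lt_of_le_of_lt this hv0q'
                  exact absurd (lt_trans huv this) (lt_irrefl _)
                · exact h
              obtain ⟨p', hp', q', hq', hadj', h1, h2⟩ :=
                hcrossed u huS v hvS huv (fun x hx => hcons x (Finset.mem_insert_of_mem hx))
              exact ⟨p', Finset.mem_insert_of_mem hp', q', Finset.mem_insert_of_mem hq', hadj', h1, h2⟩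
        · -- p strictly left of u0 : spanning edge
          push_neg at hpu
          have hpu' : p < u0 := by rw [Fin.lt_def]; omega
          have hpq : p ≠ q := by
            intro h; rw [h] at hpv0; omega
          have hpnotin : p ∉ insert q (S.erase u0) := by
            intro h
            rcases Finset.mem_insert.1 h with h | h
            · exact hpq h
            · have := Finset.min'_le _ _ (Finset.mem_of_mem_erase h)
              rw [Fin.le_def] at this; rw [Fin.lt_def] at hpu'; omega
          have hqnotin : q ∉ S.erase u0 := fun h => hqS (Finset.mem_of_mem_erase h)
          refine ⟨insert p (insert q (S.erase u0)), ?_, ?_, ?_⟩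
          · rw [Finset.card_insert_of_notMem hpnotin, Finset.card_insert_of_notMem hqnotin,
              Finset.card_erase_of_mem hu0S, hcard]
            omega
          · intro x hx
            rcases Finset.mem_insert.1 hx with rfl | hx
            · exact ⟨hlop, by omega⟩
            rcases Finset.mem_insert.1 hx with rfl | hx
            · exact ⟨by omega, hqhi⟩
            · exact hbound x (Finset.mem_of_mem_erase hx)
          · refine crossedIn_of_span (Finset.mem_insert.2 (Or.inl rfl))
              (Finset.mem_insert_of_mem (Finset.mem_insert.2 (Or.inl rfl))) hadj ?_ ?_
            · intro x hx
              rcases Finset.mem_insert.1 hx with rfl | hx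
              · exact le_refl _
              rcases Finset.mem_insert.1 hx with rfl | hx
              · rw [Fin.le_def]; omega
              · have := Finset.min'_le _ _ (Finset.mem_of_mem_erase hx)
                rw [Fin.le_def] at this ⊢
                rw [Fin.lt_def] at hpu'
                omega
            · intro x hx
              rcases Finset.mem_insert.1 hx with rfl | hx
              · rw [Fin.le_def]; omega
              rcases Finset.mem_insert.1 hx with rfl | hx
              · exact le_refl _
              · have := Finset.le_max' _ _ (Finset.mem_of_mem_erase hx)
                rw [Fin.le_def] at this ⊢
                omega
      · -- v0 at right end: extend to the left
        have hu0lo : lo < (u0:ℕ) := by omega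
        obtain ⟨p, q, hadj, hlop, hpt, htq, hqhi⟩ :=
          hcross ((u0:ℕ) - 1) (by omega) (by omega)
        have hqv0 : (q:ℕ) ≤ (v0:ℕ) := by omega
        have hqu0 : (u0:ℕ) ≤ (q:ℕ) := by omega
        have hqS : q ∈ S := by
          rw [hSIcc, Finset.mem_Icc, Fin.le_def, Fin.le_def]
          omega
        have hpu0 : p < u0 := by rw [Fin.lt_def]; omega
        have hpS : p ∉ S := by
          intro h
          have := Finset.min'_le _ _ h
          rw [Fin.le_def] at this; rw [Fin.lt_def] at hpu0; omega
        refine ⟨insert p S, ?_, ?_, ?_⟩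
        · rw [Finset.card_insert_of_notMem hpS, hcard]
        · intro x hx
          rcases Finset.mem_insert.1 hx with rfl | hx
          · exact ⟨hlop, by omega⟩
          · exact hbound x hx
        · intro u hu v hv huv hcons
          by_cases hup : u = p
          · subst hup
            have hvS : v ∈ S := by
              rcases Finset.mem_insert.1 hv with rfl | h
              · exact absurd huv (lt_irrefl _)
              · exact h
            have hvu0 : v = u0 := by
              rcases hcons u0 (Finset.mem_insert_of_mem hu0S) with h | h
              · exfalso
                have := lt_of_le_of_lt h hpu0
                exact absurd this (lt_irrefl _)
              · exact le_antisymm h (Finset.min'_le _ _ hvS)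
            exact ⟨u, Finset.mem_insert.2 (Or.inl rfl), q, Finset.mem_insert_of_mem hqS, hadj,
              le_refl _, by rw [hvu0, Fin.le_def]; omega⟩
          · have huS : u ∈ S := by
              rcases Finset.mem_insert.1 hu with h | h
              · exact absurd h hup
              · exact h
            have hvS : v ∈ S := by
              rcases Finset.mem_insert.1 hv with rfl | h
              · exfalso
                have := Finset.min'_le _ _ huS
                have : v < u := lt_of_lt_of_le hpu0 this
                exact absurd (lt_trans huv this) (lt_irrefl _)
              · exact h
            obtain ⟨p', hp', q', hq', hadj', h1, h2⟩ :=
              hcrossed u huS v hvS huv (fun x hx => hcons x (Finset.mem_insert_of_mem hx))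
            exact ⟨p', Finset.mem_insert_of_mem hp', q', Finset.mem_insert_of_mem hq', hadj', h1, h2⟩
    · -- not full: insert interior vertex
      push_neg at hfull
      obtain ⟨w, hw1, hw2, hwS⟩ := hfull
      refine ⟨insert w S, ?_, ?_, ?_⟩
      · rw [Finset.card_insert_of_notMem hwS, hcard]
      · intro x hx
        rcases Finset.mem_insert.1 hx with rfl | hx
        · constructor
          · have : lo ≤ (u0:ℕ) := hu0b.1
            rw [Fin.lt_def] at hw1; omega
          · have : (v0:ℕ) < hi := hv0b.2
            rw [Fin.lt_def] at hw2; omega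
        · exact hbound x hx
      · exact crossedIn_insert_mid hcrossed ⟨u0, hu0S, hw1⟩ ⟨v0, hv0S, hw2⟩
lemma crossed_enum (hN : 0 < N) {G : SimpleGraph (Fin N)} {S : Finset (Fin N)}
    (hS : CrossedIn G S) :
    ∃ e : ℕ → Fin N,
      (∀ r r', r < r' → r' < S.card → e r < e r') ∧
      (∀ r, r < S.card → e r ∈ S) ∧
      (∀ r, r + 1 < S.card → ∃ p q, p ≤ r ∧ r < q ∧ q < S.card ∧ G.Adj (e p) (e q)) := by
  classical
  set l := S.sort (· ≤ ·) with hl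
  have hlen : l.length = S.card := Finset.length_sort _
  have hsorted : l.Pairwise (· < ·) := S.sortedLT_sort.pairwise
  refine ⟨fun r => l.getD r ⟨0, hN⟩, ?_, ?_, ?_⟩
  · intro r r' hrr hr'
    show l.getD r ⟨0, hN⟩ < l.getD r' ⟨0, hN⟩
    rw [List.getD_eq_getElem _ _ (by omega), List.getD_eq_getElem _ _ (by omega)]
    exact List.Pairwise.rel_get_of_lt hsorted (by simpa using hrr)
  · intro r hr
    show l.getD r ⟨0, hN⟩ ∈ S
    rw [List.getD_eq_getElem _ _ (by omega)]
    exact (Finset.mem_sort _).1 (List.getElem_mem _)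
  · intro r hr
    have hmem : ∀ i, (h : i < S.card) → l.getD i ⟨0, hN⟩ ∈ S := by
      intro i h
      rw [List.getD_eq_getElem _ _ (by omega)]
      exact (Finset.mem_sort _).1 (List.getElem_mem _)
    have hmono : ∀ i j, i < j → j < S.card → l.getD i ⟨0, hN⟩ < l.getD j ⟨0, hN⟩ := by
      intro i j hij hj
      rw [List.getD_eq_getElem _ _ (by omega), List.getD_eq_getElem _ _ (by omega)]
      exact List.Pairwise.rel_get_of_lt hsorted (by simpa using hij)
    set u := l.getD r ⟨0, hN⟩ with hu
    set v := l.getD (r+1) ⟨0, hN⟩ with hv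
    have huS : u ∈ S := hmem r (by omega)
    have hvS : v ∈ S := hmem (r+1) hr
    have huv : u < v := hmono r (r+1) (by omega) hr
    have hsurj : ∀ y ∈ S, ∃ i, i < S.card ∧ l.getD i ⟨0, hN⟩ = y := by
      intro y hy
      have : y ∈ l := (Finset.mem_sort _).2 hy
      obtain ⟨i, hi, hiy⟩ := List.getElem_of_mem this
      exact ⟨i, by omega, by rw [List.getD_eq_getElem _ _ hi]; exact hiy⟩
    have hcons : ∀ w ∈ S, w ≤ u ∨ v ≤ w := by
      intro w hw
      obtain ⟨i, hi, rfl⟩ := hsurj w hw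
      rcases Nat.lt_or_ge i (r+1) with h | h
      · left
        rcases Nat.lt_or_ge i r with h' | h'
        · exact le_of_lt (hmono i r h' (by omega))
        · have : i = r := by omega
          subst this; exact le_refl _
      · right
        rcases Nat.eq_or_lt_of_le h with h' | h'
        · subst h'; exact le_refl _
        · exact le_of_lt (hmono (r+1) i h' hi)
    obtain ⟨p, hp, q, hq, hadj, hpu, hvq⟩ := hS u huS v hvS huv hcons
    obtain ⟨ip, hip, rfl⟩ := hsurj p hp
    obtain ⟨iq, hiq, rfl⟩ := hsurj q hq
    refine ⟨ip, iq, ?_, ?_, hiq, hadj⟩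
    · by_contra hc
      push_neg at hc
      have := hmono r ip hc (by omega)
      exact absurd (lt_of_le_of_lt hpu this) (lt_irrefl _)
    · by_contra hc
      push_neg at hc
      rcases Nat.eq_or_lt_of_le hc with h' | h'
      · rw [h'] at hvq
        exact absurd (lt_of_lt_of_le huv hvq) (lt_irrefl _)
      · have := hmono iq r h' (by omega)
        have := lt_of_le_of_lt hvq this
        exact absurd (lt_trans huv this) (lt_irrefl _)

noncomputable def psiMap {N k n : ℕ} (hk : 0 < k) (e : Fin k → ℕ → ℕ → Fin N) (L : List ℕ)
    (x : Fin n) : Fin N :=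
  e ⟨pieceOf (Asum L) L.length (x:ℕ) % k, Nat.mod_lt _ hk⟩
    (L.getD (pieceOf (Asum L) L.length (x:ℕ)) 0)
    ((x:ℕ) - Asum L (pieceOf (Asum L) L.length (x:ℕ)))

lemma piece_facts {n : ℕ} (L : List ℕ) (hLsum : L.sum = n) (hpos : ∀ a ∈ L, 1 ≤ a)
    (x : ℕ) (hx : x < n) :
    pieceOf (Asum L) L.length x < L.length ∧
    Asum L (pieceOf (Asum L) L.length x) ≤ x ∧
    x < Asum L (pieceOf (Asum L) L.length x + 1) ∧
    Asum L (pieceOf (Asum L) L.length x + 1)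
      = Asum L (pieceOf (Asum L) L.length x) + L.getD (pieceOf (Asum L) L.length x) 0 ∧
    1 ≤ L.getD (pieceOf (Asum L) L.length x) 0 := by
  have hAm : Asum L L.length = n := by rw [Asum_length]; exact hLsum
  have h := pieceOf_bounds (A := Asum L) (m := L.length) (x := x) (Asum_zero L) (Asum_mono L) (by omega)
  obtain ⟨h1, h2, h3⟩ := h
  have hstep := Asum_succ L h1
  exact ⟨h1, h2, h3, hstep, hpos _ (Asum_getD_mem L h1)⟩

lemma psi_strictMono {N k ℓ n : ℕ} (hk : 0 < k) (G : SimpleGraph (Fin N))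
    (lo hi : Fin k → ℕ) (e : Fin k → ℕ → ℕ → Fin N)
    (he1 : ∀ (j : Fin k) (a : ℕ), 1 ≤ a → a ≤ ℓ → ∀ r r', r < r' → r' < a → e j a r < e j a r')
    (he2 : ∀ (j : Fin k) (a : ℕ), 1 ≤ a → a ≤ ℓ →
      ∀ r, r < a → lo j ≤ (e j a r : ℕ) ∧ (e j a r : ℕ) < hi j)
    (hsep : ∀ j j' : Fin k, j < j' → hi j ≤ lo j')
    (L : List ℕ) (hLsum : L.sum = n) (hLparts : ∀ a ∈ L, 1 ≤ a ∧ a ≤ ℓ)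
    (hLlen : L.length ≤ k) :
    StrictMono (psiMap hk e L (n := n)) := by
  intro x y hxy
  have hxy' : (x:ℕ) < (y:ℕ) := hxy
  obtain ⟨hx1, hx2, hx3, hx4, hx5⟩ :=
    piece_facts L hLsum (fun a ha => (hLparts a ha).1) (x:ℕ) x.isLt
  obtain ⟨hy1, hy2, hy3, hy4, hy5⟩ :=
    piece_facts L hLsum (fun a ha => (hLparts a ha).1) (y:ℕ) y.isLt
  set jx := pieceOf (Asum L) L.length (x:ℕ) with hjx
  set jy := pieceOf (Asum L) L.length (y:ℕ) with hjy
  have hpsix : psiMap hk e L x = e ⟨jx % k, Nat.mod_lt _ hk⟩ (L.getD jx 0) ((x:ℕ) - Asum L jx) := rfl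
  have hpsiy : psiMap hk e L y = e ⟨jy % k, Nat.mod_lt _ hk⟩ (L.getD jy 0) ((y:ℕ) - Asum L jy) := rfl
  show psiMap hk e L x < psiMap hk e L y
  rw [hpsix, hpsiy]
  have hjmod : jx % k = jx := Nat.mod_eq_of_lt (by omega)
  have hjmody : jy % k = jy := Nat.mod_eq_of_lt (by omega)
  have hax : L.getD jx 0 ≤ ℓ := (hLparts _ (Asum_getD_mem L hx1)).2
  have hay : L.getD jy 0 ≤ ℓ := (hLparts _ (Asum_getD_mem L hy1)).2
  have hjle : jx ≤ jy := by
    by_contra hc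
    push_neg at hc
    have := Asum_mono L (jy + 1) jx (by omega)
    omega
  rcases Nat.eq_or_lt_of_le hjle with hjeq | hjlt
  · -- same piece
    rw [show (⟨jx % k, Nat.mod_lt _ hk⟩ : Fin k) = ⟨jy % k, Nat.mod_lt _ hk⟩ from
      Fin.ext (by simp only [hjmod, hjmody, hjeq]), hjeq]
    have h1 : Asum L jy ≤ (x:ℕ) := hjeq ▸ hx2
    exact he1 _ _ hy5 hay _ _ (by omega) (by omega)
  · -- different pieces
    have hflt : (⟨jx % k, Nat.mod_lt _ hk⟩ : Fin k) < ⟨jy % k, Nat.mod_lt _ hk⟩ := by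
      rw [Fin.lt_def]
      simp only [hjmod, hjmody]
      omega
    have hb1 := (he2 ⟨jx % k, Nat.mod_lt _ hk⟩ (L.getD jx 0) hx5 hax _ (by omega : (x:ℕ) - Asum L jx < L.getD jx 0)).2
    have hb2 := (he2 ⟨jy % k, Nat.mod_lt _ hk⟩ (L.getD jy 0) hy5 hay _ (by omega : (y:ℕ) - Asum L jy < L.getD jy 0)).1
    have hsep' := hsep _ _ hflt
    rw [Fin.lt_def]
    omega

lemma psi_cut {N k ℓ n : ℕ} (hk : 0 < k) (G : SimpleGraph (Fin N))
    (lo hi : Fin k → ℕ) (e : Fin k → ℕ → ℕ → Fin N)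
    (he2 : ∀ (j : Fin k) (a : ℕ), 1 ≤ a → a ≤ ℓ →
      ∀ r, r < a → lo j ≤ (e j a r : ℕ) ∧ (e j a r : ℕ) < hi j)
    (he3 : ∀ (j : Fin k) (a : ℕ), 1 ≤ a → a ≤ ℓ →
      ∀ r, r + 1 < a → ∃ p q, p ≤ r ∧ r < q ∧ q < a ∧ G.Adj (e j a p) (e j a q))
    (hB2 : ∀ u v : Fin N, G.Adj u v → ∀ j j' : Fin k,
      lo j ≤ (u:ℕ) → (u:ℕ) < hi j → lo j' ≤ (v:ℕ) → (v:ℕ) < hi j' → j = j')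
    (L : List ℕ) (hLsum : L.sum = n) (hLparts : ∀ a ∈ L, 1 ≤ a ∧ a ≤ ℓ)
    (hLlen : L.length ≤ k) (c : ℕ) (hc0 : 0 < c) (hcn : c < n) :
    (∀ x y : Fin n, G.Adj (psiMap hk e L x) (psiMap hk e L y) →
       (((x:ℕ) < c ∧ (y:ℕ) < c) ∨ (c ≤ (x:ℕ) ∧ c ≤ (y:ℕ)))) ↔
    ∃ j, 0 < j ∧ j < L.length ∧ (L.take j).sum = c := by
  constructor
  · -- cut implies partial sum
    intro hcut
    by_contra hnot
    obtain ⟨hj1, hj2, hj3, hj4, hj5⟩ := piece_facts L hLsum (fun a ha => (hLparts a ha).1) c hcn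
    set j := pieceOf (Asum L) L.length c with hjdef
    have hAjc : Asum L j < c := by
      rcases Nat.eq_or_lt_of_le hj2 with he | hlt
      · exfalso
        apply hnot
        refine ⟨j, ?_, hj1, he⟩
        rcases Nat.eq_zero_or_pos j with hj0 | h
        · rw [hj0, Asum_zero] at he; omega
        · exact h
      · exact hlt
    have haℓ : L.getD j 0 ≤ ℓ := (hLparts _ (Asum_getD_mem L hj1)).2
    obtain ⟨p, q, hpr, hrq, hqa, hadj⟩ := he3 ⟨j % k, Nat.mod_lt _ hk⟩ (L.getD j 0) hj5 haℓ
      (c - Asum L j - 1) (by omega)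
    have hAj1n : Asum L (j+1) ≤ n := by
      have := Asum_mono L (j+1) L.length (by omega)
      rwa [Asum_length, hLsum] at this
    have hxplt : Asum L j + p < n := by omega
    have hxqlt : Asum L j + q < n := by omega
    set xp : Fin n := ⟨Asum L j + p, hxplt⟩ with hxp
    set xq : Fin n := ⟨Asum L j + q, hxqlt⟩ with hxq
    have hvp : (xp : ℕ) = Asum L j + p := rfl
    have hvq : (xq : ℕ) = Asum L j + q := rfl
    have hpp : pieceOf (Asum L) L.length ((xp : ℕ)) = j :=
      pieceOf_eq (Asum_zero L) (Asum_mono L)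
        (by rw [Asum_length, hLsum]; exact xp.isLt) hj1 (by omega) (by omega)
    have hpq : pieceOf (Asum L) L.length ((xq : ℕ)) = j :=
      pieceOf_eq (Asum_zero L) (Asum_mono L)
        (by rw [Asum_length, hLsum]; exact xq.isLt) hj1 (by omega) (by omega)
    have hψp : psiMap hk e L xp = e ⟨j % k, Nat.mod_lt _ hk⟩ (L.getD j 0) p := by
      unfold psiMap; simp only [hpp]
      congr 1
      omega
    have hψq : psiMap hk e L xq = e ⟨j % k, Nat.mod_lt _ hk⟩ (L.getD j 0) q := by
      unfold psiMap; simp only [hpq]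
      congr 1
      omega
    have hGadj : G.Adj (psiMap hk e L xp) (psiMap hk e L xq) := by
      rw [hψp, hψq]; exact hadj
    have hside := hcut xp xq hGadj
    rw [hvp, hvq] at hside
    omega
  · -- partial sum implies cut
    rintro ⟨j, hj0, hjm, hjs⟩ x y hGxy
    have hAjc : Asum L j = c := hjs
    obtain ⟨hx1, hx2, hx3, hx4, hx5⟩ :=
      piece_facts L hLsum (fun a ha => (hLparts a ha).1) (x:ℕ) x.isLt
    obtain ⟨hy1, hy2, hy3, hy4, hy5⟩ :=
      piece_facts L hLsum (fun a ha => (hLparts a ha).1) (y:ℕ) y.isLt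
    set jx := pieceOf (Asum L) L.length (x:ℕ) with hjxdef
    set jy := pieceOf (Asum L) L.length (y:ℕ) with hjydef
    have hjkx : jx % k = jx := Nat.mod_eq_of_lt (by omega)
    have hjky : jy % k = jy := Nat.mod_eq_of_lt (by omega)
    have haxℓ : L.getD jx 0 ≤ ℓ := (hLparts _ (Asum_getD_mem L hx1)).2
    have hayℓ : L.getD jy 0 ≤ ℓ := (hLparts _ (Asum_getD_mem L hy1)).2
    have hbx := he2 ⟨jx % k, Nat.mod_lt _ hk⟩ (L.getD jx 0) hx5 haxℓ
      ((x:ℕ) - Asum L jx) (by omega)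
    have hby := he2 ⟨jy % k, Nat.mod_lt _ hk⟩ (L.getD jy 0) hy5 hayℓ
      ((y:ℕ) - Asum L jy) (by omega)
    have hψx : psiMap hk e L x = e ⟨jx % k, Nat.mod_lt _ hk⟩ (L.getD jx 0) ((x:ℕ) - Asum L jx) := rfl
    have hψy : psiMap hk e L y = e ⟨jy % k, Nat.mod_lt _ hk⟩ (L.getD jy 0) ((y:ℕ) - Asum L jy) := rfl
    rw [hψx, hψy] at hGxy
    have hjj : (⟨jx % k, Nat.mod_lt _ hk⟩ : Fin k) = ⟨jy % k, Nat.mod_lt _ hk⟩ :=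
      hB2 _ _ hGxy _ _ hbx.1 hbx.2 hby.1 hby.2
    have hjeq : jx = jy := by
      have := congrArg Fin.val hjj
      simpa [hjkx, hjky] using this
    by_cases hxlt : (x:ℕ) < c
    · left
      refine ⟨hxlt, ?_⟩
      have hjxj : jx < j := by
        by_contra hcon
        push_neg at hcon
        have := Asum_mono L j jx hcon
        omega
      have h1 := Asum_mono L (jx+1) j (by omega)
      have h2 : (y:ℕ) < Asum L (jx+1) := by rw [hjeq]; exact hy3
      omega
    · right
      push_neg at hxlt
      refine ⟨hxlt, ?_⟩
      have hjxj : j ≤ jx := by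
        by_contra hcon
        push_neg at hcon
        have := Asum_mono L (jx+1) j (by omega)
        omega
      have hjy' : j ≤ jy := hjeq ▸ hjxj
      have h1 := Asum_mono L j jy hjy'
      omega

/-- **Lemma.**  If the irreducible block decomposition of `G` contains at least `k`
blocks of order at least `ℓ`, then `S_n(G) ≥ F_{n,ℓ}` for each `n ≤ k`. -/
theorem many_large_irreducible_blocks (N k ℓ : ℕ) (hk : 1 ≤ k) (hℓ : 1 ≤ ℓ)
    (G : SimpleGraph (Fin N)) (s : ℕ) (sz : Fin s → ℕ)
    (Gs : ∀ i, SimpleGraph (Fin (sz i))) (hdec : IsIrredDecomp G sz Gs)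
    (hbig : k ≤ {i : Fin s | ℓ ≤ sz i}.ncard) :
    ∀ n : ℕ, n ≤ k → genFib ℓ n ≤ numSub G n := by
  classical
  obtain ⟨⟨hNsum, hadj⟩, hsz1, hirr⟩ := hdec
  set off : Fin s → ℕ := fun i => ∑ j ∈ Finset.univ.filter (fun j => j < i), sz j with hoff
  have hO1 : ∀ i i' : Fin s, i < i' → off i + sz i ≤ off i' := by
    intro i i' hii
    have hnotin : i ∉ Finset.univ.filter (fun j : Fin s => j < i) := by simp
    have hsub : insert i (Finset.univ.filter (fun j : Fin s => j < i)) ⊆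
        Finset.univ.filter (fun j : Fin s => j < i') := by
      intro j hj
      rcases Finset.mem_insert.1 hj with rfl | hj
      · simp [hii]
      · simp only [Finset.mem_filter, Finset.mem_univ, true_and] at hj ⊢
        exact lt_trans hj hii
    have h := Finset.sum_le_sum_of_subset (f := sz) hsub
    rw [Finset.sum_insert hnotin] at h
    simp only [hoff]
    omega
  have hO2 : ∀ i : Fin s, off i + sz i ≤ N := by
    intro i
    have hnotin : i ∉ Finset.univ.filter (fun j : Fin s => j < i) := by simp
    have h := Finset.sum_le_sum_of_subset (f := sz)
      (Finset.subset_univ (insert i (Finset.univ.filter (fun j : Fin s => j < i))))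
    rw [Finset.sum_insert hnotin] at h
    simp only [hoff]
    omega
  have hO3 : ∀ (i i' : Fin s) (c : ℕ), off i ≤ c → c < off i + sz i →
      off i' ≤ c → c < off i' + sz i' → i = i' := by
    intro i i' c h1 h2 h3 h4
    rcases lt_trichotomy i i' with h | h | h
    · have := hO1 i i' h; omega
    · exact h
    · have := hO1 i' i h; omega
  have hB2 : ∀ u v : Fin N, G.Adj u v → ∃ i : Fin s,
      (off i ≤ (u:ℕ) ∧ (u:ℕ) < off i + sz i) ∧ (off i ≤ (v:ℕ) ∧ (v:ℕ) < off i + sz i) := by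
    intro u v huv
    rw [hadj] at huv
    obtain ⟨i, x, y, hxy, hu, hv⟩ := huv
    have hx := x.isLt
    have hy := y.isLt
    have hui : (u:ℕ) = off i + (x:ℕ) := hu
    have hvi : (v:ℕ) = off i + (y:ℕ) := hv
    exact ⟨i, ⟨by omega, by omega⟩, ⟨by omega, by omega⟩⟩
  have hB3 : ∀ i : Fin s, ∀ t : ℕ, off i ≤ t → t + 1 < off i + sz i →
      ∃ p q : Fin N, G.Adj p q ∧ off i ≤ (p:ℕ) ∧ (p:ℕ) ≤ t ∧ t < (q:ℕ) ∧ (q:ℕ) < off i + sz i := by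
    intro i t h1 h2
    have hr : t - off i + 1 < sz i := by omega
    have hirr' := hirr i
    rw [IrredGraph] at hirr'
    push_neg at hirr'
    obtain ⟨x, y, hxy, hGadj, hc1, hc2⟩ :=
      hirr' ⟨t - off i, by omega⟩ ⟨t - off i + 1, hr⟩ (by rw [Fin.lt_def]; simp)
    have hxv := x.isLt
    have hyv := y.isLt
    have hadj' : G.Adj ⟨off i + (x:ℕ), by have := hO2 i; omega⟩ ⟨off i + (y:ℕ), by have := hO2 i; omega⟩ := by
      rw [hadj]
      exact ⟨i, x, y, hGadj, rfl, rfl⟩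
    refine ⟨_, _, hadj', ?_, ?_, ?_, ?_⟩
    · simp
    · simp only at hc2 ⊢
      rw [Fin.lt_def] at hxy
      omega
    · simp only at hc1 ⊢
      omega
    · simp only
      omega
  intro n hn
  have hBigcard : k ≤ (Finset.univ.filter (fun i : Fin s => ℓ ≤ sz i)).card := by
    rw [Set.ncard_eq_toFinset_card'] at hbig
    simpa [Set.toFinset_setOf] using hbig
  obtain ⟨Bk, hBksub, hBkcard⟩ := Finset.exists_subset_card_eq hBigcard
  set cE := Bk.orderEmbOfFin hBkcard with hcEdef
  have hcE : ∀ j : Fin k, ℓ ≤ sz (cE j) := fun j =>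
    (Finset.mem_filter.1 (hBksub (Finset.orderEmbOfFin_mem Bk hBkcard j))).2
  have hN0 : 0 < N := by
    have h0 : (0:ℕ) < k := hk
    have := hO2 (cE ⟨0, h0⟩)
    have := hcE ⟨0, h0⟩
    omega
  have He : ∀ (j : Fin k) (a : ℕ), ∃ e : ℕ → Fin N, 1 ≤ a → a ≤ ℓ →
      ((∀ r r', r < r' → r' < a → e r < e r') ∧
       (∀ r, r < a → off (cE j) ≤ (e r : ℕ) ∧ (e r : ℕ) < off (cE j) + sz (cE j)) ∧
       (∀ r, r + 1 < a → ∃ p q, p ≤ r ∧ r < q ∧ q < a ∧ G.Adj (e p) (e q))) := by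
    intro j a
    by_cases h : 1 ≤ a ∧ a ≤ ℓ
    · obtain ⟨S, hScard, hSbound, hScross⟩ :=
        exists_crossed G (off (cE j)) (off (cE j) + sz (cE j)) (hO2 _) (hB3 _) a h.1
          (by have := hcE j; omega)
      obtain ⟨e, he1, he2, he3⟩ := crossed_enum hN0 hScross
      rw [hScard] at he1 he2 he3
      exact ⟨e, fun _ _ => ⟨he1, fun r hr => hSbound _ (he2 r hr), he3⟩⟩
    · exact ⟨fun _ => ⟨0, hN0⟩, fun h1 h2 => absurd ⟨h1, h2⟩ h⟩
  choose e he using He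
  have hk0 : 0 < k := hk
  -- the injection from compositions
  have hmain : ∀ L ∈ comps ℓ n, StrictMono (psiMap hk0 e L (n := n)) ∧
      (∀ c, 0 < c → c < n →
        ((∀ x y : Fin n, G.Adj (psiMap hk0 e L x) (psiMap hk0 e L y) →
           (((x:ℕ) < c ∧ (y:ℕ) < c) ∨ (c ≤ (x:ℕ) ∧ c ≤ (y:ℕ)))) ↔
         ∃ j, 0 < j ∧ j < L.length ∧ (L.take j).sum = c)) := by
    intro L hL
    obtain ⟨hLsum, hLparts⟩ := comps_mem n L hL
    have hLlen : L.length ≤ k :=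
      le_trans (le_trans (sum_ge_length (fun a ha => (hLparts a ha).1)) (le_of_eq hLsum)) hn
    have he1' : ∀ (j : Fin k) (a : ℕ), 1 ≤ a → a ≤ ℓ →
        ∀ r r', r < r' → r' < a → e j a r < e j a r' :=
      fun j a h1 h2 => (he j a h1 h2).1
    have he2' : ∀ (j : Fin k) (a : ℕ), 1 ≤ a → a ≤ ℓ → ∀ r, r < a →
        off (cE j) ≤ (e j a r : ℕ) ∧ (e j a r : ℕ) < off (cE j) + sz (cE j) :=
      fun j a h1 h2 => (he j a h1 h2).2.1
    have he3' : ∀ (j : Fin k) (a : ℕ), 1 ≤ a → a ≤ ℓ → ∀ r, r + 1 < a →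
        ∃ p q, p ≤ r ∧ r < q ∧ q < a ∧ G.Adj (e j a p) (e j a q) :=
      fun j a h1 h2 => (he j a h1 h2).2.2
    have hsep : ∀ j j' : Fin k, j < j' →
        off (cE j) + sz (cE j) ≤ off (cE j') :=
      fun j j' hjj => hO1 _ _ (OrderEmbedding.strictMono cE hjj)
    have hB2' : ∀ u v : Fin N, G.Adj u v → ∀ j j' : Fin k,
        off (cE j) ≤ (u:ℕ) → (u:ℕ) < off (cE j) + sz (cE j) →
        off (cE j') ≤ (v:ℕ) → (v:ℕ) < off (cE j') + sz (cE j') → j = j' := by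
      intro u v huv j j' h1 h2 h3 h4
      obtain ⟨i, ⟨hu1, hu2⟩, ⟨hv1, hv2⟩⟩ := hB2 u v huv
      have hji : cE j = i := hO3 _ _ _ h1 h2 hu1 hu2
      have hji' : cE j' = i := hO3 _ _ _ h3 h4 hv1 hv2
      exact cE.injective (hji.trans hji'.symm)
    exact ⟨psi_strictMono hk0 G (fun j => off (cE j)) (fun j => off (cE j) + sz (cE j)) e
        he1' he2' hsep L hLsum hLparts hLlen,
      fun c hc0 hcn => psi_cut hk0 G (fun j => off (cE j)) (fun j => off (cE j) + sz (cE j)) e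
        he2' he3' hB2' L hLsum hLparts hLlen c hc0 hcn⟩
  -- the map into induced subgraphs
  have hmem : ∀ L ∈ comps ℓ n, IndSub (G.comap (psiMap hk0 e L (n := n))) G := by
    intro L hL
    exact ⟨OrderEmbedding.ofStrictMono _ (hmain L hL).1, fun i j => Iff.rfl⟩
  have hinj : ∀ L1 ∈ comps ℓ n, ∀ L2 ∈ comps ℓ n,
      G.comap (psiMap hk0 e L1 (n := n)) = G.comap (psiMap hk0 e L2 (n := n)) → L1 = L2 := by
    intro L1 h1 L2 h2 hFeq
    obtain ⟨hs1, hp1⟩ := comps_mem n L1 h1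
    obtain ⟨hs2, hp2⟩ := comps_mem n L2 h2
    refine partial_sum_recover L1 L2 (fun a ha => (hp1 a ha).1) (fun a ha => (hp2 a ha).1)
      (by rw [hs1, hs2]) ?_
    intro c hc0 hcs
    rw [hs1] at hcs
    have hcut1 := (hmain L1 h1).2 c hc0 hcs
    have hcut2 := (hmain L2 h2).2 c hc0 hcs
    rw [← hcut1, ← hcut2]
    constructor
    · intro h x y hxy
      apply h x y
      have : (G.comap (psiMap hk0 e L1 (n := n))).Adj x y =
          (G.comap (psiMap hk0 e L2 (n := n))).Adj x y := by rw [hFeq]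
      exact (this ▸ (hxy : (G.comap (psiMap hk0 e L2 (n := n))).Adj x y) :)
    · intro h x y hxy
      apply h x y
      have : (G.comap (psiMap hk0 e L1 (n := n))).Adj x y =
          (G.comap (psiMap hk0 e L2 (n := n))).Adj x y := by rw [hFeq]
      exact (this ▸ (hxy : (G.comap (psiMap hk0 e L1 (n := n))).Adj x y) :)
  -- counting
  have hΦ : Function.Injective (fun L : {L // L ∈ comps ℓ n} =>
      (⟨G.comap (psiMap hk0 e L.1 (n := n)), hmem L.1 L.2⟩ :
        {H : SimpleGraph (Fin n) // IndSub H G})) := by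
    intro a b hab
    exact Subtype.ext (hinj a.1 a.2 b.1 b.2 (congrArg Subtype.val hab))
  have hcardle := Nat.card_le_card_of_injective _ hΦ
  have h1 : Nat.card {L // L ∈ comps ℓ n} = genFib ℓ n := by
    simp [comps_card]
  have h2 : numSub G n = Nat.card {H : SimpleGraph (Fin n) // IndSub H G} := by
    rw [numSub, ← Nat.card_coe_set_eq]
    rfl
  omega
end

section
/- Let k ∈ ℕ, let G_1, …, G_k be ordered graphs, and let G = G_1 + … + G_k. Suppose that for each i ∈ [k] there is an integer m(i) such that G_i has at least two pairwise non-isomorphic irreducible induced ordered subgraphs on m(i) vertices. Then S_n(G) ≥ 2^{n-1} for each n ≤ k. -/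
open Finset

-- ================= development =================
namespace STI

lemma indSub_refl {m : ℕ} (G : SimpleGraph (Fin m)) : IndSub G G :=
  ⟨(OrderIso.refl (Fin m)).toOrderEmbedding, fun _ _ => Iff.rfl⟩

lemma indSub_trans {a b c : ℕ} {A : SimpleGraph (Fin a)} {B : SimpleGraph (Fin b)}
    {C : SimpleGraph (Fin c)} (h1 : IndSub A B) (h2 : IndSub B C) : IndSub A C := by
  obtain ⟨φ, hφ⟩ := h1
  obtain ⟨ψ, hψ⟩ := h2
  exact ⟨φ.trans ψ, fun i j => (hφ i j).trans (hψ (φ i) (φ j))⟩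

def Cov {n : ℕ} (G : SimpleGraph (Fin n)) (c : ℕ) : Prop :=
  ∃ i j : Fin n, G.Adj i j ∧ (i : ℕ) ≤ c ∧ c < (j : ℕ)

lemma irred_iff_cov {n : ℕ} (G : SimpleGraph (Fin n)) :
    IrredGraph G ↔ ∀ c : ℕ, c + 1 < n → Cov G c := by
  constructor
  · intro h c hc
    by_contra hcov
    refine h ⟨⟨c, by omega⟩, ⟨c+1, hc⟩, Fin.mk_lt_mk.mpr (by omega), fun i j hij hadj => ?_⟩
    show (j : ℕ) ≤ c ∨ c + 1 ≤ (i : ℕ)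
    by_contra hk
    push_neg at hk
    exact hcov ⟨i, j, hadj, by omega, by omega⟩
  · rintro h ⟨u, v, huv, hsep⟩
    have huv' := Fin.lt_def.mp huv
    obtain ⟨i, j, hadj, h1, h2⟩ := h (u : ℕ) (by have := v.isLt; omega)
    have hij : i < j := by rw [Fin.lt_def]; omega
    rcases hsep i j hij hadj with h3 | h3 <;> omega

lemma delete_vertex {M : ℕ} (H : SimpleGraph (Fin (M + 2))) (w : ℕ) (hw : w < M + 2)
    (hcov : ∀ c : ℕ, c + 1 < M + 1 →
      ∃ i j : Fin (M + 2), H.Adj i j ∧ (i : ℕ) ≠ w ∧ (j : ℕ) ≠ w ∧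
        (i : ℕ) ≤ (if c < w then c else c + 1) ∧ (if c < w then c else c + 1) < (j : ℕ)) :
    ∃ H' : SimpleGraph (Fin (M + 1)), IrredGraph H' ∧ IndSub H' H := by
  have hfv : ∀ x : Fin (M+1), (if (x:ℕ) < w then (x:ℕ) else (x:ℕ) + 1) < M + 2 := by
    intro x; have := x.isLt; split <;> omega
  set f : Fin (M+1) → Fin (M+2) := fun x => ⟨_, hfv x⟩ with hf
  have hfval : ∀ x : Fin (M+1), (f x : ℕ) = if (x:ℕ) < w then (x:ℕ) else (x:ℕ) + 1 :=
    fun x => rfl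
  have hmono : StrictMono f := by
    intro a b hab
    have h1 := Fin.lt_def.mp hab
    rw [Fin.lt_def, hfval, hfval]
    split <;> split <;> omega
  have hpre : ∀ z : Fin (M+2), (z:ℕ) ≠ w → ∃ x : Fin (M+1), f x = z ∧
      ((z:ℕ) < w → (x:ℕ) = (z:ℕ)) ∧ (w ≤ (z:ℕ) → (x:ℕ) = (z:ℕ) - 1) := by
    intro z hz
    rcases Nat.lt_or_ge (z:ℕ) w with h | h
    · refine ⟨⟨(z:ℕ), by omega⟩, Fin.ext ?_, fun _ => rfl, fun h2 => by omega⟩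
      show (if (z:ℕ) < w then (z:ℕ) else (z:ℕ)+1) = (z:ℕ)
      rw [if_pos h]
    · have hz1 : 1 ≤ (z:ℕ) := by omega
      have := z.isLt
      refine ⟨⟨(z:ℕ) - 1, by omega⟩, Fin.ext ?_, fun h2 => by omega, fun _ => rfl⟩
      show (if (z:ℕ)-1 < w then (z:ℕ)-1 else ((z:ℕ)-1)+1) = (z:ℕ)
      rw [if_neg (by omega)]
      omega
  refine ⟨H.comap f, ?_, ⟨OrderEmbedding.ofStrictMono f hmono, fun i j => Iff.rfl⟩⟩
  rw [irred_iff_cov]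
  intro c hc
  obtain ⟨i, j, hadj, hiw, hjw, h1, h2⟩ := hcov c (by omega)
  obtain ⟨x, hxf, hx1, hx2⟩ := hpre i hiw
  obtain ⟨y, hyf, hy1, hy2⟩ := hpre j hjw
  refine ⟨x, y, ?_, ?_, ?_⟩
  · show H.Adj (f x) (f y)
    rw [hxf, hyf]; exact hadj
  · rcases Nat.lt_or_ge (i:ℕ) w with h | h
    · rw [hx1 h]; split at h1 <;> omega
    · rw [hx2 h]; split at h1 <;> omega
  · rcases Nat.lt_or_ge (j:ℕ) w with h | h
    · rw [hy1 h]; split at h2 <;> omega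
    · rw [hy2 h]; split at h2 <;> omega

lemma irred_delete {M : ℕ} (H : SimpleGraph (Fin (M + 2))) (hH : IrredGraph H) :
    ∃ H' : SimpleGraph (Fin (M + 1)), IrredGraph H' ∧ IndSub H' H := by
  have hcv := (irred_iff_cov H).mp hH
  by_cases hA : ∀ c : ℕ, c + 1 < M + 1 →
      ∃ i j : Fin (M+2), H.Adj i j ∧ (i:ℕ) ≤ c ∧ c < (j:ℕ) ∧ (j:ℕ) ≤ M
  · apply delete_vertex H (M+1) (by omega)
    intro c hc
    obtain ⟨i, j, hadj, h1, h2, h3⟩ := hA c hc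
    have hcw : c < M + 1 := by omega
    refine ⟨i, j, hadj, by omega, by omega, ?_, ?_⟩ <;> rw [if_pos hcw] <;> omega
  · push_neg at hA
    obtain ⟨c0, hc0, hbad⟩ := hA
    obtain ⟨i0, j0, hadj0, hi0, hj0⟩ := hcv c0 (by omega)
    have hj0M : (j0 : ℕ) = M + 1 := by
      have := hbad i0 j0 hadj0 hi0 hj0
      have := j0.isLt
      omega
    have hc0M : c0 < M := by omega
    apply delete_vertex H (c0 + 1) (by omega)
    intro c hc
    rcases lt_trichotomy c c0 with h | h | h
    · obtain ⟨i, j, hadj, h1, h2⟩ := hcv c (by omega)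
      have hjne : (j : ℕ) ≠ c0 + 1 := by
        intro hj
        have := hbad i j hadj (by omega) (by omega)
        omega
      refine ⟨i, j, hadj, by omega, hjne, ?_, ?_⟩ <;>
        rw [if_pos (show c < c0 + 1 by omega)] <;> omega
    · refine ⟨i0, j0, hadj0, by omega, by omega, ?_, ?_⟩ <;>
        rw [if_pos (show c < c0 + 1 by omega)] <;> omega
    · refine ⟨i0, j0, hadj0, by omega, by omega, ?_, ?_⟩ <;>
        rw [if_neg (show ¬ c < c0 + 1 by omega)] <;> omega

lemma chain_exists : ∀ (m : ℕ) (H : SimpleGraph (Fin m)), IrredGraph H →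
    ∀ p : ℕ, 1 ≤ p → p ≤ m → ∃ D : SimpleGraph (Fin p), IrredGraph D ∧ IndSub D H := by
  intro m
  induction m with
  | zero => intro H _ p h1 h2; omega
  | succ M ih =>
    intro H hH p h1 h2
    rcases eq_or_lt_of_le h2 with heq | hlt
    · subst heq; exact ⟨H, hH, indSub_refl H⟩
    · obtain ⟨M', rfl⟩ : ∃ M', M = M' + 1 := ⟨M - 1, by omega⟩
      obtain ⟨H', h1', h2'⟩ := irred_delete H hH
      obtain ⟨D, hD1, hD2⟩ := ih H' h1' p h1 (by omega)
      exact ⟨D, hD1, indSub_trans hD2 h2'⟩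

abbrev Piece := (p : ℕ) × SimpleGraph (Fin p)

def total : List Piece → ℕ
  | [] => 0
  | pc :: L => pc.1 + total L

def sumAdj : List Piece → ℕ → ℕ → Prop
  | [], _, _ => False
  | pc :: L, u, v =>
      (∃ (hu : u < pc.1) (hv : v < pc.1), pc.2.Adj ⟨u, hu⟩ ⟨v, hv⟩) ∨
      (pc.1 ≤ u ∧ pc.1 ≤ v ∧ sumAdj L (u - pc.1) (v - pc.1))

lemma sumAdj_symm : ∀ (L : List Piece) (u v : ℕ), sumAdj L u v → sumAdj L v u := by
  intro L
  induction L with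
  | nil => intro u v h; exact h.elim
  | cons pc L ih =>
    rintro u v (⟨hu, hv, h⟩ | ⟨hu, hv, h⟩)
    · exact Or.inl ⟨hv, hu, h.symm⟩
    · exact Or.inr ⟨hv, hu, ih _ _ h⟩

lemma sumAdj_irrefl : ∀ (L : List Piece) (u : ℕ), ¬ sumAdj L u u := by
  intro L
  induction L with
  | nil => intro u h; exact h
  | cons pc L ih =>
    rintro u (⟨hu, hv, h⟩ | ⟨hu, hv, h⟩)
    · exact pc.2.loopless.irrefl _ h
    · exact ih _ h

lemma sumAdj_head {pc : Piece} {L : List Piece} {u v : ℕ} (hu : u < pc.1) (hv : v < pc.1) :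
    sumAdj (pc :: L) u v ↔ pc.2.Adj ⟨u, hu⟩ ⟨v, hv⟩ := by
  constructor
  · rintro (⟨hu', hv', h⟩ | ⟨hu', hv', h⟩)
    · exact h
    · omega
  · intro h; exact Or.inl ⟨hu, hv, h⟩

lemma sumAdj_shift {pc : Piece} {L : List Piece} {u v : ℕ} :
    sumAdj (pc :: L) (u + pc.1) (v + pc.1) ↔ sumAdj L u v := by
  constructor
  · rintro (⟨hu', hv', h⟩ | ⟨hu', hv', h⟩)
    · omega
    · rw [Nat.add_sub_cancel, Nat.add_sub_cancel] at h; exact h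
  · intro h
    exact Or.inr ⟨by omega, by omega, by rw [Nat.add_sub_cancel, Nat.add_sub_cancel]; exact h⟩

lemma irred_cross {q : ℕ} {Q : SimpleGraph (Fin q)} (hq : IrredGraph Q) {p : ℕ}
    (hp : 1 ≤ p) (hpq : p < q) :
    ∃ x y : Fin q, Q.Adj x y ∧ (x : ℕ) < p ∧ p ≤ (y : ℕ) := by
  obtain ⟨x, y, h, h1, h2⟩ := (irred_iff_cov Q).mp hq (p - 1) (by omega)
  exact ⟨x, y, h, by omega, by omega⟩

lemma no_cross {p q : ℕ} {P : SimpleGraph (Fin p)} {Q : SimpleGraph (Fin q)}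
    {L M : List Piece} (hq : IrredGraph Q) (hp : 1 ≤ p) (hpq : p < q)
    (htot : total (⟨p, P⟩ :: L) = total (⟨q, Q⟩ :: M))
    (hadj : ∀ u v : ℕ, u < total (⟨p, P⟩ :: L) → v < total (⟨p, P⟩ :: L) →
      (sumAdj (⟨p, P⟩ :: L) u v ↔ sumAdj (⟨q, Q⟩ :: M) u v)) : False := by
  obtain ⟨x, y, h, h1, h2⟩ := irred_cross hq hp hpq
  have hx := x.isLt
  have hy := y.isLt
  have htot' : q ≤ total (⟨p, P⟩ :: L) := by
    have : total (⟨q, Q⟩ :: M) = q + total M := rfl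
    omega
  have hR : sumAdj (⟨q, Q⟩ :: M) (x : ℕ) (y : ℕ) := Or.inl ⟨hx, hy, by simpa using h⟩
  have hL := (hadj (x : ℕ) (y : ℕ) (by omega) (by omega)).mpr hR
  rcases hL with ⟨hu', hv', _⟩ | ⟨hu', hv', _⟩
  · simp only at hu' hv'; omega
  · simp only at hu' hv'; omega

lemma sum_unique : ∀ (L M : List Piece),
    (∀ pc ∈ L, 1 ≤ pc.1 ∧ IrredGraph pc.2) → (∀ pc ∈ M, 1 ≤ pc.1 ∧ IrredGraph pc.2) →
    total L = total M →
    (∀ u v : ℕ, u < total L → v < total L → (sumAdj L u v ↔ sumAdj M u v)) →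
    L = M := by
  intro L
  induction L with
  | nil =>
    intro M _ hM htot _
    cases M with
    | nil => rfl
    | cons qc M =>
      exfalso
      have h1 := (hM qc List.mem_cons_self).1
      have : total (qc :: M) = qc.1 + total M := rfl
      have : total ([] : List Piece) = 0 := rfl
      omega
  | cons pc L ih =>
    intro M hL hM htot hadj
    cases M with
    | nil =>
      exfalso
      have h1 := (hL pc List.mem_cons_self).1
      have : total (pc :: L) = pc.1 + total L := rfl
      have : total ([] : List Piece) = 0 := rfl
      omega
    | cons qc M =>
      obtain ⟨p, P⟩ := pc
      obtain ⟨q, Q⟩ := qc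
      have hp := hL ⟨p, P⟩ List.mem_cons_self
      have hq := hM ⟨q, Q⟩ List.mem_cons_self
      have hp1 : 1 ≤ p := hp.1
      have hP : IrredGraph P := hp.2
      have hq1 : 1 ≤ q := hq.1
      have hQ : IrredGraph Q := hq.2
      have hpq : p = q := by
        by_contra hne
        rcases Nat.lt_or_ge p q with h | h
        · exact no_cross hQ hp1 h htot hadj
        · refine no_cross hP hq1 (by omega) htot.symm ?_
          intro u v hu hv
          refine (hadj u v ?_ ?_).symm
          · rw [htot]; exact hu
          · rw [htot]; exact hv
      subst hpq
      have htL : total (⟨p, P⟩ :: L) = p + total L := rfl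
      have htM : total (⟨p, Q⟩ :: M) = p + total M := rfl
      have hPQ : P = Q := by
        ext x y
        have hx := x.isLt
        have hy := y.isLt
        have h1 : sumAdj (⟨p, P⟩ :: L) (x : ℕ) (y : ℕ) ↔ P.Adj x y := by
          rw [sumAdj_head hx hy]
        have h2 : sumAdj (⟨p, Q⟩ :: M) (x : ℕ) (y : ℕ) ↔ Q.Adj x y := by
          rw [sumAdj_head hx hy]
        rw [← h1, ← h2]
        exact hadj _ _ (by omega) (by omega)
      subst hPQ
      have hLM : L = M := by
        refine ih M (fun pc h => hL pc (List.mem_cons_of_mem _ h))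
          (fun pc h => hM pc (List.mem_cons_of_mem _ h)) (by omega) ?_
        intro u v hu hv
        have := hadj (u + p) (v + p) (by omega) (by omega)
        rwa [sumAdj_shift, sumAdj_shift] at this
      rw [hLM]

def offset {k : ℕ} (sz : Fin k → ℕ) (i : Fin k) : ℕ :=
  ∑ j ∈ Finset.univ.filter (fun j => j < i), sz j

lemma offset_add_le {k : ℕ} (sz : Fin k → ℕ) {i i' : Fin k} (h : i < i') :
    offset sz i + sz i ≤ offset sz i' := by
  have hnotmem : i ∉ Finset.univ.filter (fun j => j < i) := by simp
  have hsub : insert i (Finset.univ.filter (fun j => j < i)) ⊆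
      Finset.univ.filter (fun j => j < i') := by
    intro j hj
    simp only [Finset.mem_insert, Finset.mem_filter, Finset.mem_univ, true_and] at *
    rcases hj with rfl | hj
    · exact h
    · exact lt_trans hj h
  calc offset sz i + sz i = ∑ j ∈ insert i (Finset.univ.filter (fun j => j < i)), sz j := by
        rw [Finset.sum_insert hnotmem, Nat.add_comm, offset]
    _ ≤ offset sz i' := Finset.sum_le_sum_of_subset hsub

lemma offset_add_le_total {k : ℕ} (sz : Fin k → ℕ) (i : Fin k) :
    offset sz i + sz i ≤ ∑ j, sz j := by
  have hnotmem : i ∉ Finset.univ.filter (fun j => j < i) := by simp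
  have hsub : insert i (Finset.univ.filter (fun j => j < i)) ⊆ Finset.univ :=
    fun j _ => Finset.mem_univ j
  calc offset sz i + sz i = ∑ j ∈ insert i (Finset.univ.filter (fun j => j < i)), sz j := by
        rw [Finset.sum_insert hnotmem, Nat.add_comm, offset]
    _ ≤ ∑ j, sz j := Finset.sum_le_sum_of_subset hsub

lemma offset_block_eq {k : ℕ} (sz : Fin k → ℕ) {i i' : Fin k} {z : ℕ}
    (h1 : offset sz i ≤ z) (h2 : z < offset sz i + sz i)
    (h3 : offset sz i' ≤ z) (h4 : z < offset sz i' + sz i') : i = i' := by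
  rcases lt_trichotomy i i' with h | h | h
  · have := offset_add_le sz h; omega
  · exact h
  · have := offset_add_le sz h; omega

variable {N k : ℕ} {G : SimpleGraph (Fin N)} {sz : Fin k → ℕ} {Gs : ∀ i, SimpleGraph (Fin (sz i))}

lemma sum_embed (hsum : IsFamSum G sz Gs) :
    ∀ (L : List Piece) (b : ℕ), b + L.length ≤ k →
    (∀ (idx : ℕ) (h : idx < L.length) (i : Fin k), (i : ℕ) = b + idx →
      IndSub (L.get ⟨idx, h⟩).2 (Gs i)) →
    ∃ φ : Fin (total L) → Fin N, StrictMono φ ∧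
      (∀ (u : Fin (total L)) (hb : b < k), offset sz ⟨b, hb⟩ ≤ (φ u : ℕ)) ∧
      (∀ u v : Fin (total L), sumAdj L (u : ℕ) (v : ℕ) ↔ G.Adj (φ u) (φ v)) := by
  have hoff : ∀ (i : Fin k) (x : Fin (sz i)), offset sz i + (x : ℕ) < N := by
    intro i x
    have h1 := offset_add_le_total sz i
    have h2 := x.isLt
    have hN := hsum.1
    omega
  have hchar : ∀ (u v : Fin N), G.Adj u v ↔ ∃ (i : Fin k) (x y : Fin (sz i)),
      (Gs i).Adj x y ∧ (u : ℕ) = offset sz i + (x : ℕ) ∧ (v : ℕ) = offset sz i + (y : ℕ) :=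
    hsum.2
  intro L
  induction L with
  | nil =>
    intro b _ _
    refine ⟨fun u => u.elim0, fun u => u.elim0, fun u => u.elim0, fun u => u.elim0⟩
  | cons pc L ih =>
    obtain ⟨p, P⟩ := pc
    intro b hb hpieces
    simp only [List.length_cons] at hb
    have hbk : b < k := by omega
    set ib : Fin k := ⟨b, hbk⟩ with hib
    have hP : IndSub P (Gs ib) := hpieces 0 (by simp) ib rfl
    obtain ⟨e, he⟩ := hP
    obtain ⟨φ', hmono', hlb', hadj'⟩ := ih (b+1) (by omega)
      (fun idx h i hi => hpieces (idx+1) (by simp only [List.length_cons]; omega) i (by omega))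
    have htotc : total (⟨p, P⟩ :: L) = p + total L := rfl
    have hnonempty : ∀ u : Fin (total (⟨p, P⟩ :: L)), p ≤ (u : ℕ) → b + 1 < k := by
      intro u hu
      have h1 : (u : ℕ) < p + total L := lt_of_lt_of_le u.isLt (le_of_eq htotc)
      have h3 : L ≠ [] := by
        intro h
        have h4 : total L = 0 := by rw [h]; rfl
        omega
      have h5 : 0 < L.length := List.length_pos_iff.mpr h3
      omega
    have hub : ∀ u : Fin (total (⟨p, P⟩ :: L)), ¬ (u : ℕ) < p → (u : ℕ) - p < total L := by
      intro u h
      have h1 : (u : ℕ) < p + total L := lt_of_lt_of_le u.isLt (le_of_eq htotc)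
      omega
    set φ : Fin (total (⟨p, P⟩ :: L)) → Fin N := fun u =>
      if h : (u : ℕ) < p then ⟨offset sz ib + (e ⟨(u : ℕ), h⟩ : ℕ), hoff ib _⟩
      else φ' ⟨(u : ℕ) - p, hub u h⟩ with hφ
    have hval1 : ∀ (u : Fin (total (⟨p, P⟩ :: L))) (h : (u : ℕ) < p),
        φ u = ⟨offset sz ib + (e ⟨(u : ℕ), h⟩ : ℕ), hoff ib _⟩ := by
      intro u h; simp only [hφ, dif_pos h]
    have hval2 : ∀ (u : Fin (total (⟨p, P⟩ :: L))) (h : ¬ (u : ℕ) < p),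
        φ u = φ' ⟨(u : ℕ) - p, hub u h⟩ := by
      intro u h; simp only [hφ, dif_neg h]
    have hrange1 : ∀ (u : Fin (total (⟨p, P⟩ :: L))) (h : (u : ℕ) < p),
        offset sz ib ≤ (φ u : ℕ) ∧ (φ u : ℕ) < offset sz ib + sz ib := by
      intro u h
      rw [hval1 u h]
      have h2 := (e ⟨(u : ℕ), h⟩).isLt
      constructor
      · show offset sz ib ≤ offset sz ib + (e ⟨(u : ℕ), h⟩ : ℕ); omega
      · show offset sz ib + (e ⟨(u : ℕ), h⟩ : ℕ) < offset sz ib + sz ib; omega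
    have hrange2 : ∀ (u : Fin (total (⟨p, P⟩ :: L))) (h : ¬ (u : ℕ) < p),
        offset sz ib + sz ib ≤ (φ u : ℕ) := by
      intro u h
      rw [hval2 u h]
      have hb1 := hnonempty u (by omega)
      have h1 := hlb' ⟨(u : ℕ) - p, hub u h⟩ hb1
      have h2 := offset_add_le sz (show ib < ⟨b+1, hb1⟩ from Fin.mk_lt_mk.mpr (Nat.lt_succ_self b))
      omega
    have hmono : StrictMono φ := by
      intro u v huv
      have huv' := Fin.lt_def.mp huv
      rw [Fin.lt_def]
      by_cases hu : (u : ℕ) < p <;> by_cases hv : (v : ℕ) < p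
      · rw [hval1 u hu, hval1 v hv]
        show offset sz ib + ((e ⟨(u : ℕ), hu⟩ : Fin (sz ib)) : ℕ) <
          offset sz ib + ((e ⟨(v : ℕ), hv⟩ : Fin (sz ib)) : ℕ)
        have h1 := e.strictMono (show (⟨(u : ℕ), hu⟩ : Fin p) < ⟨(v : ℕ), hv⟩ from
          Fin.mk_lt_mk.mpr huv')
        have h2 := Fin.lt_def.mp h1
        omega
      · have h1 := (hrange1 u hu).2
        have h2 := hrange2 v hv
        omega
      · omega
      · rw [hval2 u hu, hval2 v hv]
        exact Fin.lt_def.mp (hmono' (show (⟨(u : ℕ) - p, hub u hu⟩ : Fin (total L)) <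
          ⟨(v : ℕ) - p, hub v hv⟩ from Fin.mk_lt_mk.mpr (by omega)))
    have hlb : ∀ (u : Fin (total (⟨p, P⟩ :: L))) (hbb : b < k),
        offset sz ⟨b, hbb⟩ ≤ (φ u : ℕ) := by
      intro u hbb
      by_cases hu : (u : ℕ) < p
      · exact (hrange1 u hu).1
      · have hsame : offset sz ⟨b, hbb⟩ = offset sz ib := rfl
        have := hrange2 u hu
        omega
    refine ⟨φ, hmono, hlb, ?_⟩
    intro u v
    by_cases hu : (u : ℕ) < p <;> by_cases hv : (v : ℕ) < p
    · rw [sumAdj_head hu hv, hval1 u hu, hval1 v hv, he, hchar]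
      constructor
      · intro h
        exact ⟨ib, e ⟨(u : ℕ), hu⟩, e ⟨(v : ℕ), hv⟩, h, rfl, rfl⟩
      · rintro ⟨i, x, y, hxy, hux, hvy⟩
        have hux' : offset sz ib + ((e ⟨(u : ℕ), hu⟩ : Fin (sz ib)) : ℕ) =
            offset sz i + (x : ℕ) := hux
        have hvy' : offset sz ib + ((e ⟨(v : ℕ), hv⟩ : Fin (sz ib)) : ℕ) =
            offset sz i + (y : ℕ) := hvy
        have hx := x.isLt
        have hy := y.isLt
        have hexu := (e ⟨(u : ℕ), hu⟩).isLt
        have hexv := (e ⟨(v : ℕ), hv⟩).isLt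
        have hieq : i = ib := offset_block_eq sz (z := offset sz i + (x : ℕ))
          (by omega) (by omega) (by omega) (by omega)
        subst hieq
        have hxx : x = e ⟨(u : ℕ), hu⟩ := Fin.ext (by omega)
        have hyy : y = e ⟨(v : ℕ), hv⟩ := Fin.ext (by omega)
        rw [hxx, hyy] at hxy
        exact hxy
    · apply iff_of_false
      · rintro (⟨hu', hv', _⟩ | ⟨hu', hv', _⟩) <;>
          (have hfst : ((⟨p, P⟩ : Piece)).1 = p := rfl; omega)
      · intro hG
        rw [hchar] at hG
        obtain ⟨i, x, y, hxy, hux, hvy⟩ := hG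
        have h1 := (hrange1 u hu).1
        have h2 := (hrange1 u hu).2
        have hux' : (φ u : ℕ) = offset sz i + (x : ℕ) := hux
        have hvy' : (φ v : ℕ) = offset sz i + (y : ℕ) := hvy
        have hx := x.isLt
        have hy := y.isLt
        have hieq : i = ib := offset_block_eq sz (z := (φ u : ℕ))
          (by omega) (by omega) (by omega) (by omega)
        subst hieq
        have h3 := hrange2 v hv
        omega
    · apply iff_of_false
      · rintro (⟨hu', hv', _⟩ | ⟨hu', hv', _⟩) <;>
          (have hfst : ((⟨p, P⟩ : Piece)).1 = p := rfl; omega)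
      · intro hG
        rw [hchar] at hG
        obtain ⟨i, x, y, hxy, hux, hvy⟩ := hG
        have h1 := (hrange1 v hv).1
        have h2 := (hrange1 v hv).2
        have hux' : (φ u : ℕ) = offset sz i + (x : ℕ) := hux
        have hvy' : (φ v : ℕ) = offset sz i + (y : ℕ) := hvy
        have hx := x.isLt
        have hy := y.isLt
        have hieq : i = ib := offset_block_eq sz (z := (φ v : ℕ))
          (by omega) (by omega) (by omega) (by omega)
        subst hieq
        have h3 := hrange2 u hu
        omega
    · have hsh : sumAdj (⟨p, P⟩ :: L) (u : ℕ) (v : ℕ) ↔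
          sumAdj L ((u : ℕ) - p) ((v : ℕ) - p) := by
        have hfst : ((⟨p, P⟩ : Piece)).1 = p := rfl
        constructor
        · rintro (⟨hu', hv', _⟩ | ⟨_, _, h⟩)
          · omega
          · exact h
        · intro h; exact Or.inr ⟨by omega, by omega, h⟩
      rw [hsh, hval2 u hu, hval2 v hv]
      exact hadj' ⟨(u : ℕ) - p, hub u hu⟩ ⟨(v : ℕ) - p, hub v hv⟩


def sumGraph (L : List Piece) (n : ℕ) : SimpleGraph (Fin n) where
  Adj u v := sumAdj L ↑u ↑v
  symm := ⟨fun u v h => sumAdj_symm L _ _ h⟩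
  loopless := ⟨fun u h => sumAdj_irrefl L _ h⟩

lemma sumGraph_indSub (hsum : IsFamSum G sz Gs) (L : List Piece) {n : ℕ} (htot : total L = n)
    (hlen : L.length ≤ k)
    (hpieces : ∀ (idx : ℕ) (h : idx < L.length) (i : Fin k), (i : ℕ) = idx →
      IndSub (L.get ⟨idx, h⟩).2 (Gs i)) :
    IndSub (sumGraph L n) G := by
  obtain ⟨φ, hmono, _, hadj⟩ := sum_embed hsum L 0 (by omega)
    (fun idx h i hi => hpieces idx h i (by omega))
  have hcast : ∀ u : Fin n, (u : ℕ) < total L :=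
    fun u => lt_of_lt_of_le u.isLt (le_of_eq htot.symm)
  refine ⟨OrderEmbedding.ofStrictMono (fun u => φ ⟨(u : ℕ), hcast u⟩) ?_, ?_⟩
  · intro a b hab
    exact hmono (Fin.mk_lt_mk.mpr (Fin.lt_def.mp hab))
  · intro i j
    exact hadj ⟨(i : ℕ), hcast i⟩ ⟨(j : ℕ), hcast j⟩

lemma sumGraph_inj {L M : List Piece} {n : ℕ}
    (hL : ∀ pc ∈ L, 1 ≤ pc.1 ∧ IrredGraph pc.2) (hM : ∀ pc ∈ M, 1 ≤ pc.1 ∧ IrredGraph pc.2)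
    (htL : total L = n) (htM : total M = n) (h : sumGraph L n = sumGraph M n) : L = M := by
  refine sum_unique L M hL hM (by omega) ?_
  intro u v hu hv
  have h1 : (sumGraph L n).Adj ⟨u, by omega⟩ ⟨v, by omega⟩ ↔
      (sumGraph M n).Adj ⟨u, by omega⟩ ⟨v, by omega⟩ := by rw [h]
  exact h1

structure Pal {k : ℕ} {sz : Fin k → ℕ} (Gs : ∀ i, SimpleGraph (Fin (sz i))) (j : ℕ) where
  r : ℕ
  hr : 2 ≤ r
  D : ℕ → Piece
  top : Bool → Piece
  hD : ∀ p, 1 ≤ p → p < r → (D p).1 = p ∧ IrredGraph (D p).2 ∧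
    ∀ (i : Fin k), (i : ℕ) = j → IndSub (D p).2 (Gs i)
  htop : ∀ b, (top b).1 = r ∧ IrredGraph (top b).2 ∧
    ∀ (i : Fin k), (i : ℕ) = j → IndSub (top b).2 (Gs i)
  hne : top false ≠ top true

def decodeAux (pal : ∀ j : ℕ, Pal Gs j) : ℕ → ℕ → List Bool → List Piece
  | j, acc, [] => if acc < (pal j).r then [(pal j).D acc] else [(pal j).top false]
  | j, acc, false :: t =>
    if acc < (pal j).r then (pal j).D acc :: decodeAux pal (j + 1) 1 t
    else (pal j).top false :: decodeAux pal (j + 1) 1 t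
  | j, acc, true :: t =>
    if acc < (pal j).r then decodeAux pal j (acc + 1) t
    else (pal j).top true :: decodeAux pal (j + 1) 1 t

lemma decode_total (pal : ∀ j : ℕ, Pal Gs j) :
    ∀ (s : List Bool) (j acc : ℕ), 1 ≤ acc → acc ≤ (pal j).r →
      total (decodeAux pal j acc s) = acc + s.length := by
  intro s
  induction s with
  | nil =>
    intro j acc h1 h2
    by_cases h : acc < (pal j).r
    · simp only [decodeAux, if_pos h]
      show (((pal j).D acc).1) + total [] = acc + 0
      have := ((pal j).hD acc h1 h).1
      have ht : total ([] : List Piece) = 0 := rfl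
      omega
    · simp only [decodeAux, if_neg h]
      show (((pal j).top false).1) + total [] = acc + 0
      have := ((pal j).htop false).1
      have ht : total ([] : List Piece) = 0 := rfl
      omega
  | cons bit t ih =>
    intro j acc h1 h2
    have htop1 : ∀ (j' : ℕ), 1 ≤ (pal j').r := fun j' => le_trans (by omega) (pal j').hr
    cases bit
    · by_cases h : acc < (pal j).r
      · simp only [decodeAux, if_pos h]
        show (((pal j).D acc).1) + total (decodeAux pal (j+1) 1 t) = acc + (t.length + 1)
        have hs := ((pal j).hD acc h1 h).1
        have hrec := ih (j+1) 1 (by omega) (htop1 (j+1))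
        omega
      · simp only [decodeAux, if_neg h]
        show (((pal j).top false).1) + total (decodeAux pal (j+1) 1 t) = acc + (t.length + 1)
        have hs := ((pal j).htop false).1
        have hrec := ih (j+1) 1 (by omega) (htop1 (j+1))
        omega
    · by_cases h : acc < (pal j).r
      · simp only [decodeAux, if_pos h]
        have hrec := ih j (acc+1) (by omega) (by omega)
        simp only [List.length_cons]
        omega
      · simp only [decodeAux, if_neg h]
        show (((pal j).top true).1) + total (decodeAux pal (j+1) 1 t) = acc + (t.length + 1)
        have hs := ((pal j).htop true).1
        have hrec := ih (j+1) 1 (by omega) (htop1 (j+1))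
        omega

lemma pal_r_pos (pal : ∀ j : ℕ, Pal Gs j) (j : ℕ) : 1 ≤ (pal j).r :=
  le_trans (by omega) (pal j).hr

lemma decode_head (pal : ∀ j : ℕ, Pal Gs j) :
    ∀ (s : List Bool) (j acc : ℕ), 1 ≤ acc → acc ≤ (pal j).r →
      ∃ pc L', decodeAux pal j acc s = pc :: L' ∧ acc ≤ pc.1 := by
  intro s
  induction s with
  | nil =>
    intro j acc h1 h2
    by_cases h : acc < (pal j).r
    · exact ⟨(pal j).D acc, [], by simp only [decodeAux, if_pos h],
        le_of_eq ((pal j).hD acc h1 h).1.symm⟩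
    · exact ⟨(pal j).top false, [], by simp only [decodeAux, if_neg h],
        by have := ((pal j).htop false).1; omega⟩
  | cons bit t ih =>
    intro j acc h1 h2
    cases bit
    · by_cases h : acc < (pal j).r
      · exact ⟨(pal j).D acc, decodeAux pal (j+1) 1 t, by simp only [decodeAux, if_pos h],
          le_of_eq ((pal j).hD acc h1 h).1.symm⟩
      · exact ⟨(pal j).top false, decodeAux pal (j+1) 1 t, by simp only [decodeAux, if_neg h],
          by have := ((pal j).htop false).1; omega⟩
    · by_cases h : acc < (pal j).r
      · obtain ⟨pc, L', heq, hge⟩ := ih j (acc + 1) (by omega) (by omega)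
        exact ⟨pc, L', by simp only [decodeAux, if_pos h]; exact heq, by omega⟩
      · exact ⟨(pal j).top true, decodeAux pal (j+1) 1 t, by simp only [decodeAux, if_neg h],
          by have := ((pal j).htop true).1; omega⟩

lemma decode_spec (pal : ∀ j : ℕ, Pal Gs j) :
    ∀ (s : List Bool) (j acc : ℕ), 1 ≤ acc → acc ≤ (pal j).r →
      ∀ pc ∈ decodeAux pal j acc s, 1 ≤ pc.1 ∧ IrredGraph pc.2 := by
  intro s
  induction s with
  | nil =>
    intro j acc h1 h2 pc hpc
    by_cases h : acc < (pal j).r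
    · simp only [decodeAux, if_pos h, List.mem_singleton] at hpc
      subst hpc
      exact ⟨by have := ((pal j).hD acc h1 h).1; omega, ((pal j).hD acc h1 h).2.1⟩
    · simp only [decodeAux, if_neg h, List.mem_singleton] at hpc
      subst hpc
      exact ⟨by have := ((pal j).htop false).1; have := (pal j).hr; omega,
        ((pal j).htop false).2.1⟩
  | cons bit t ih =>
    intro j acc h1 h2 pc hpc
    cases bit
    · by_cases h : acc < (pal j).r
      · simp only [decodeAux, if_pos h, List.mem_cons] at hpc
        rcases hpc with rfl | hpc
        · exact ⟨by have := ((pal j).hD acc h1 h).1; omega, ((pal j).hD acc h1 h).2.1⟩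
        · exact ih (j+1) 1 (by omega) (pal_r_pos pal (j+1)) pc hpc
      · simp only [decodeAux, if_neg h, List.mem_cons] at hpc
        rcases hpc with rfl | hpc
        · exact ⟨by have := ((pal j).htop false).1; have := (pal j).hr; omega,
            ((pal j).htop false).2.1⟩
        · exact ih (j+1) 1 (by omega) (pal_r_pos pal (j+1)) pc hpc
    · by_cases h : acc < (pal j).r
      · simp only [decodeAux, if_pos h] at hpc
        exact ih j (acc+1) (by omega) (by omega) pc hpc
      · simp only [decodeAux, if_neg h, List.mem_cons] at hpc
        rcases hpc with rfl | hpc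
        · exact ⟨by have := ((pal j).htop true).1; have := (pal j).hr; omega,
            ((pal j).htop true).2.1⟩
        · exact ih (j+1) 1 (by omega) (pal_r_pos pal (j+1)) pc hpc

lemma decode_blocks (pal : ∀ j : ℕ, Pal Gs j) :
    ∀ (s : List Bool) (j acc : ℕ), 1 ≤ acc → acc ≤ (pal j).r →
      ∀ (idx : ℕ) (pc : Piece), (decodeAux pal j acc s)[idx]? = some pc →
        ∀ i : Fin k, (i : ℕ) = j + idx → IndSub pc.2 (Gs i) := by
  intro s
  induction s with
  | nil =>
    intro j acc h1 h2 idx pc hpc i hi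
    by_cases h : acc < (pal j).r
    · simp only [decodeAux, if_pos h] at hpc
      cases idx with
      | zero =>
        simp only [List.getElem?_cons_zero, List.getElem?_cons_succ, List.getElem?_nil] at hpc
        cases hpc; exact ((pal j).hD acc h1 h).2.2 i (by omega)
      | succ idx' => simp only [List.getElem?_cons_zero, List.getElem?_cons_succ, List.getElem?_nil] at hpc; cases hpc
    · simp only [decodeAux, if_neg h] at hpc
      cases idx with
      | zero =>
        simp only [List.getElem?_cons_zero, List.getElem?_cons_succ, List.getElem?_nil] at hpc
        cases hpc; exact ((pal j).htop false).2.2 i (by omega)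
      | succ idx' => simp only [List.getElem?_cons_zero, List.getElem?_cons_succ, List.getElem?_nil] at hpc; cases hpc
  | cons bit t ih =>
    intro j acc h1 h2 idx pc hpc i hi
    cases bit
    · by_cases h : acc < (pal j).r
      · simp only [decodeAux, if_pos h] at hpc
        cases idx with
        | zero =>
          simp only [List.getElem?_cons_zero, List.getElem?_cons_succ, List.getElem?_nil] at hpc
          cases hpc; exact ((pal j).hD acc h1 h).2.2 i (by omega)
        | succ idx' =>
          simp only [List.getElem?_cons_zero, List.getElem?_cons_succ, List.getElem?_nil] at hpc
          exact ih (j+1) 1 (by omega) (pal_r_pos pal (j+1)) idx' pc hpc i (by omega)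
      · simp only [decodeAux, if_neg h] at hpc
        cases idx with
        | zero =>
          simp only [List.getElem?_cons_zero, List.getElem?_cons_succ, List.getElem?_nil] at hpc
          cases hpc; exact ((pal j).htop false).2.2 i (by omega)
        | succ idx' =>
          simp only [List.getElem?_cons_zero, List.getElem?_cons_succ, List.getElem?_nil] at hpc
          exact ih (j+1) 1 (by omega) (pal_r_pos pal (j+1)) idx' pc hpc i (by omega)
    · by_cases h : acc < (pal j).r
      · simp only [decodeAux, if_pos h] at hpc
        exact ih j (acc+1) (by omega) (by omega) idx pc hpc i hi
      · simp only [decodeAux, if_neg h] at hpc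
        cases idx with
        | zero =>
          simp only [List.getElem?_cons_zero, List.getElem?_cons_succ, List.getElem?_nil] at hpc
          cases hpc; exact ((pal j).htop true).2.2 i (by omega)
        | succ idx' =>
          simp only [List.getElem?_cons_zero, List.getElem?_cons_succ, List.getElem?_nil] at hpc
          exact ih (j+1) 1 (by omega) (pal_r_pos pal (j+1)) idx' pc hpc i (by omega)

lemma decode_len (pal : ∀ j : ℕ, Pal Gs j) :
    ∀ (s : List Bool) (j acc : ℕ), (decodeAux pal j acc s).length ≤ s.length + 1 := by
  intro s
  induction s with
  | nil =>
    intro j acc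
    by_cases h : acc < (pal j).r <;> simp [decodeAux, h]
  | cons bit t ih =>
    intro j acc
    cases bit
    · by_cases h : acc < (pal j).r
      · simp only [decodeAux, if_pos h, List.length_cons]
        have := ih (j+1) 1; omega
      · simp only [decodeAux, if_neg h, List.length_cons]
        have := ih (j+1) 1; omega
    · by_cases h : acc < (pal j).r
      · simp only [decodeAux, if_pos h, List.length_cons]
        have := ih j (acc+1); omega
      · simp only [decodeAux, if_neg h, List.length_cons]
        have := ih (j+1) 1; omega

lemma decode_inj (pal : ∀ j : ℕ, Pal Gs j) :
    ∀ (s s' : List Bool) (j acc : ℕ), 1 ≤ acc → acc ≤ (pal j).r →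
      s.length = s'.length → decodeAux pal j acc s = decodeAux pal j acc s' → s = s' := by
  intro s
  induction s with
  | nil =>
    intro s' j acc _ _ hlen _
    cases s' with
    | nil => rfl
    | cons b t => simp at hlen
  | cons bit t ih =>
    intro s' j acc h1 h2 hlen heq
    cases s' with
    | nil => simp at hlen
    | cons bit' t' =>
      simp only [List.length_cons] at hlen
      by_cases h : acc < (pal j).r
      · cases bit <;> cases bit'
        · simp only [decodeAux, if_pos h] at heq
          rw [ih t' (j+1) 1 (by omega) (pal_r_pos pal (j+1)) (by omega) (List.cons.inj heq).2]
        · exfalso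
          simp only [decodeAux, if_pos h] at heq
          obtain ⟨pc, L', hL', hge⟩ := decode_head pal t' j (acc+1) (by omega) (by omega)
          rw [hL'] at heq
          have hhead := (List.cons.inj heq).1
          have hs := ((pal j).hD acc h1 h).1
          rw [← hhead] at hge
          omega
        · exfalso
          simp only [decodeAux, if_pos h] at heq
          obtain ⟨pc, L', hL', hge⟩ := decode_head pal t j (acc+1) (by omega) (by omega)
          rw [hL'] at heq
          have hhead := (List.cons.inj heq).1
          have hs := ((pal j).hD acc h1 h).1
          rw [hhead] at hge
          omega
        · simp only [decodeAux, if_pos h] at heq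
          rw [ih t' j (acc+1) (by omega) (by omega) (by omega) heq]
      · cases bit <;> cases bit' <;> simp only [decodeAux, if_neg h] at heq
        · rw [ih t' (j+1) 1 (by omega) (pal_r_pos pal (j+1)) (by omega) (List.cons.inj heq).2]
        · exact absurd (List.cons.inj heq).1 (pal j).hne
        · exact absurd ((List.cons.inj heq).1).symm (pal j).hne
        · rw [ih t' (j+1) 1 (by omega) (pal_r_pos pal (j+1)) (by omega) (List.cons.inj heq).2]

lemma graph_subsingleton {m : ℕ} (hm : m ≤ 1) (A B : SimpleGraph (Fin m)) : A = B := by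
  ext x y
  have hx := x.isLt
  have hy := y.isLt
  have hxy : x = y := Fin.ext (by omega)
  subst hxy
  exact iff_of_false (A.loopless.irrefl x) (B.loopless.irrefl x)

lemma pal_exists
    (h2 : ∀ i : Fin k, ∃ (mi : ℕ) (H1 H2 : SimpleGraph (Fin mi)), H1 ≠ H2 ∧
        IrredGraph H1 ∧ IrredGraph H2 ∧ IndSub H1 (Gs i) ∧ IndSub H2 (Gs i))
    (j : ℕ) (i : Fin k) (hij : (i : ℕ) = j ∨ k ≤ j) : Nonempty (Pal Gs j) := by
  obtain ⟨m, H1, H2, hne, hi1, hi2, hs1, hs2⟩ := h2 i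
  have hm2 : 2 ≤ m := by
    by_contra hm
    exact hne (graph_subsingleton (by omega) H1 H2)
  have hblock : ∀ (i' : Fin k), (i' : ℕ) = j → i' = i := by
    intro i' hi'
    rcases hij with hij | hij
    · exact Fin.ext (by omega)
    · exact absurd i'.isLt (by omega)
  have hsel : ∀ p : ℕ, ∃ pc : Piece,
      1 ≤ p → p < m → pc.1 = p ∧ IrredGraph pc.2 ∧ IndSub pc.2 (Gs i) := by
    intro p
    by_cases hp : 1 ≤ p ∧ p < m
    · obtain ⟨D, hD1, hD2⟩ := chain_exists m H1 hi1 p hp.1 (by omega)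
      exact ⟨⟨p, D⟩, fun _ _ => ⟨rfl, hD1, indSub_trans hD2 hs1⟩⟩
    · exact ⟨⟨1, ⊥⟩, fun a b => absurd ⟨a, b⟩ hp⟩
  choose Df hDf using hsel
  refine ⟨⟨m, hm2, Df,
    fun b => match b with | false => ⟨m, H1⟩ | true => ⟨m, H2⟩, ?_, ?_, ?_⟩⟩
  · intro p hp1 hp2
    obtain ⟨e1, e2, e3⟩ := hDf p hp1 hp2
    exact ⟨e1, e2, fun i' hi' => by rw [hblock i' hi']; exact e3⟩
  · intro b
    cases b
    · exact ⟨rfl, hi1, fun i' hi' => by rw [hblock i' hi']; exact hs1⟩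
    · exact ⟨rfl, hi2, fun i' hi' => by rw [hblock i' hi']; exact hs2⟩
  · intro hEq
    injection hEq with h1 h2'
    exact hne h2'

lemma main_bound (hsum : IsFamSum G sz Gs)
    (h2 : ∀ i : Fin k, ∃ (mi : ℕ) (H1 H2 : SimpleGraph (Fin mi)), H1 ≠ H2 ∧
        IrredGraph H1 ∧ IrredGraph H2 ∧ IndSub H1 (Gs i) ∧ IndSub H2 (Gs i)) :
    ∀ n : ℕ, n ≤ k → 2 ^ (n - 1) ≤ numSub G n := by
  intro n hnk
  have hfin : Finite (SimpleGraph (Fin n)) :=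
    Finite.of_injective (fun (A : SimpleGraph (Fin n)) => A.Adj)
      (fun A B h => SimpleGraph.ext h)
  rcases Nat.eq_zero_or_pos n with rfl | hn1
  · have hmem : (⊥ : SimpleGraph (Fin 0)) ∈ {H : SimpleGraph (Fin 0) | IndSub H G} :=
      ⟨OrderEmbedding.ofStrictMono (fun x => x.elim0) (fun x => x.elim0), fun i => i.elim0⟩
    have hsub : ({(⊥ : SimpleGraph (Fin 0))} : Set (SimpleGraph (Fin 0))) ⊆
        {H : SimpleGraph (Fin 0) | IndSub H G} := by
      intro x hx
      rcases hx with rfl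
      exact hmem
    have h1 := Set.ncard_le_ncard hsub (Set.toFinite _)
    rw [Set.ncard_singleton] at h1
    exact h1
  · have hk1 : 0 < k := by omega
    have hpalj : ∀ j : ℕ, Nonempty (Pal Gs j) := by
      intro j
      by_cases hj : j < k
      · exact pal_exists h2 j ⟨j, hj⟩ (Or.inl rfl)
      · exact pal_exists h2 j ⟨0, hk1⟩ (Or.inr (by omega))
    let pal : ∀ j, Pal Gs j := fun j => (hpalj j).some
    have hr1 : ∀ j, 1 ≤ (pal j).r := pal_r_pos pal
    have hlen : ∀ s : Fin (n-1) → Bool, (List.ofFn s).length = n - 1 :=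
      fun s => List.length_ofFn
    set code : (Fin (n-1) → Bool) → List Piece :=
      fun s => decodeAux pal 0 1 (List.ofFn s) with hcode
    have htot : ∀ s, total (code s) = n := by
      intro s
      rw [hcode]
      rw [decode_total pal _ 0 1 le_rfl (hr1 0), hlen]
      omega
    set Φ : (Fin (n-1) → Bool) → SimpleGraph (Fin n) := fun s => sumGraph (code s) n with hPhi
    have hmem : ∀ s, Φ s ∈ {H : SimpleGraph (Fin n) | IndSub H G} := by
      intro s
      refine sumGraph_indSub hsum (code s) (htot s) ?_ ?_
      · have h1 := decode_len pal (List.ofFn s) 0 1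
        rw [hlen] at h1
        have h2' : (code s).length ≤ n - 1 + 1 := h1
        omega
      · intro idx h i hi
        exact decode_blocks pal (List.ofFn s) 0 1 le_rfl (hr1 0) idx _
          (List.getElem?_eq_getElem h) i (by omega)
    have hinj : Function.Injective Φ := by
      intro s s' hss
      have hLL : code s = code s' := sumGraph_inj
        (decode_spec pal _ 0 1 le_rfl (hr1 0)) (decode_spec pal _ 0 1 le_rfl (hr1 0))
        (htot s) (htot s') hss
      have hss' := decode_inj pal _ _ 0 1 le_rfl (hr1 0) (by rw [hlen, hlen]) hLL
      exact List.ofFn_injective hss'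
    calc 2 ^ (n-1) = Nat.card (Fin (n-1) → Bool) := by
          simp [Nat.card_eq_fintype_card, Fintype.card_fun]
      _ = (Set.univ : Set (Fin (n-1) → Bool)).ncard := (Set.ncard_univ _).symm
      _ = (Φ '' Set.univ).ncard := (Set.ncard_image_of_injective _ hinj).symm
      _ ≤ numSub G n := by
          refine Set.ncard_le_ncard ?_ (Set.toFinite _)
          rintro x ⟨s, _, rfl⟩
          exact hmem s

end STI

/-- **Lemma.**  If `G = G_1 + … + G_k` where each `G_i` has at least two non-isomorphic
irreducible induced subgraphs of some common order `m(i)`, then `S_n(G) ≥ 2^{n-1}` for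
each `n ≤ k`. -/
theorem sum_two_irreducibles (N k : ℕ) (G : SimpleGraph (Fin N))
    (sz : Fin k → ℕ) (Gs : ∀ i, SimpleGraph (Fin (sz i))) (hsum : IsFamSum G sz Gs)
    (h2 : ∀ i : Fin k, ∃ (mi : ℕ) (H1 H2 : SimpleGraph (Fin mi)), H1 ≠ H2 ∧
        IrredGraph H1 ∧ IrredGraph H2 ∧ IndSub H1 (Gs i) ∧ IndSub H2 (Gs i)) :
    ∀ n : ℕ, n ≤ k → 2 ^ (n - 1) ≤ numSub G n :=
  STI.main_bound hsum h2
end
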